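/- arXiv:2511.04364 — 5 statements merged into one kernel-verified Lean document; each statement's English description precedes it below -/
import Mathlib

section
/- CR(6,3) = 26. That is: every edge-coloring of the complete graph K_26 (with arbitrarily many colors) contains an orderable copy of K_6 or a rainbow copy of K_3, and there exists an edge-coloring of K_25 containing neither an orderable K_6 nor a rainbow K_3. -/
/-- A coloring `c` of the edges of the graph on `Fin m` with adjacency relation `Adj` is
*orderable* if there is a linear ordering of the vertices (given by the ranking
permutation `π`) such that the color of every edge is determined by its `π`-smaller
endpoint: if `i` precedes both `j` and `k`, then the edges `ij` and `ik` get the same color. -/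
def OrderableColoring {m : ℕ} (Adj : Fin m → Fin m → Prop) (c : Fin m → Fin m → ℕ) : Prop :=
  ∃ π : Equiv.Perm (Fin m),
    ∀ i j k : Fin m, Adj i j → Adj i k → π i < π j → π i < π k → c i j = c i k

/-- The edge-coloring `χ` of the complete graph on `Fin n` contains an orderable copy
of the complete graph `K p`. -/
def HasOrderableClique (p n : ℕ) (χ : Sym2 (Fin n) → ℕ) : Prop :=
  ∃ f : Fin p → Fin n, Function.Injective f ∧
    OrderableColoring (fun i j => i ≠ j) (fun i j => χ s(f i, f j))

/-- The edge-coloring `χ` of the complete graph on `Fin n` contains a rainbow copy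
of the complete graph `K t`: all edges of the copy get pairwise distinct colors. -/
def HasRainbowClique (t n : ℕ) (χ : Sym2 (Fin n) → ℕ) : Prop :=
  ∃ f : Fin t → Fin n, Function.Injective f ∧
    ∀ i j k l : Fin t, i < j → k < l →
      χ s(f i, f j) = χ s(f k, f l) → i = k ∧ j = l

/-!
A coloring without rainbow triangles is a Gallai coloring, and by Gallai's theorem its vertex set
splits into at least two parts such that each pair of parts is joined in a single color and only
two colors occur between parts. An orderable `K_{p+1}` arises from an orderable `K_p` inside a part,
preceded by any vertex outside it, or inside the color class of a vertex `u`, preceded by `u`.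
Counting parts and color classes shows that `2, 3, 6, 11, 26` vertices force orderable cliques of
sizes `2, …, 6`. Only the step to `11` needs a closer look at the color classes, and it ends in a
parity argument.

For the lower bound, blow up every vertex of the pentagon coloring of `K_5` into a pentagon in two
new colors. An orderable `K_6` in this coloring of `K_25` would need either three vertices of one
block seen in a single color from a fourth, or three blocks seen in a single color from a fourth.
-/

open Finset

namespace CanonicalRamsey

section Gallai

variable {V : Type*} {χ : Sym2 V → ℕ} {S T : Finset V}

def IsGallai (χ : Sym2 V → ℕ) (S : Finset V) : Prop :=
  ∀ x ∈ S, ∀ y ∈ S, ∀ z ∈ S, x ≠ y → x ≠ z → y ≠ z →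
    χ s(x, y) = χ s(x, z) ∨ χ s(x, y) = χ s(y, z) ∨ χ s(x, z) = χ s(y, z)

def HasOrderableCliqueIn (χ : Sym2 V → ℕ) (S : Finset V) (p : ℕ) : Prop :=
  ∃ f : Fin p → V, (∀ i, f i ∈ S) ∧ Function.Injective f ∧
    ∀ i j k, i < j → i < k → χ s(f i, f j) = χ s(f i, f k)

namespace IsGallai

theorem mono (h : IsGallai χ S) (hTS : T ⊆ S) : IsGallai χ T :=
  fun x hx y hy z hz => h x (hTS hx) y (hTS hy) z (hTS hz)

theorem eq_or_eq_of_ne (h : IsGallai χ S) {x y z : V} (hx : x ∈ S) (hy : y ∈ S) (hz : z ∈ S)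
    (hxy : x ≠ y) (hxz : x ≠ z) (hyz : y ≠ z) (hne : χ s(x, y) ≠ χ s(x, z)) :
    χ s(y, z) = χ s(x, y) ∨ χ s(y, z) = χ s(x, z) := by
  rcases h x hx y hy z hz hxy hxz hyz with h | h | h
  exacts [absurd h hne, .inl h.symm, .inr h.symm]

end IsGallai

namespace HasOrderableCliqueIn

theorem mono {p : ℕ} (h : HasOrderableCliqueIn χ T p) (hTS : T ⊆ S) :
    HasOrderableCliqueIn χ S p :=
  let ⟨f, hfT, hf, hc⟩ := h
  ⟨f, fun i => hTS (hfT i), hf, hc⟩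

theorem cons {p : ℕ} {v : V} (h : HasOrderableCliqueIn χ T p) (hv : v ∈ S) (hTS : T ⊆ S)
    (hvT : v ∉ T) (hmono : ∀ x ∈ T, ∀ y ∈ T, χ s(v, x) = χ s(v, y)) :
    HasOrderableCliqueIn χ S (p + 1) := by
  obtain ⟨f, hfT, hf, hc⟩ := h
  refine ⟨Fin.cons v f, Fin.cases hv fun i => hTS (hfT i), ?_, ?_⟩
  · exact Fin.cons_injective_iff.mpr ⟨fun ⟨i, hi⟩ => hvT (hi ▸ hfT i), hf⟩
  · intro i j k hij hik
    induction i using Fin.cases with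
    | zero =>
      obtain ⟨j, rfl⟩ := Fin.exists_succ_eq.mpr (Fin.pos_iff_ne_zero.mp hij)
      obtain ⟨k, rfl⟩ := Fin.exists_succ_eq.mpr (Fin.pos_iff_ne_zero.mp hik)
      exact hmono _ (hfT j) _ (hfT k)
    | succ i =>
      obtain ⟨j, rfl⟩ := Fin.exists_succ_eq.mpr (Fin.ne_zero_of_lt hij)
      obtain ⟨k, rfl⟩ := Fin.exists_succ_eq.mpr (Fin.ne_zero_of_lt hik)
      exact hc i j k (Fin.succ_lt_succ_iff.mp hij) (Fin.succ_lt_succ_iff.mp hik)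

end HasOrderableCliqueIn

theorem hasOrderableCliqueIn_one (hS : S.Nonempty) : HasOrderableCliqueIn χ S 1 :=
  let ⟨x, hx⟩ := hS
  ⟨fun _ => x, fun _ => hx, fun i j _ => Subsingleton.elim i j,
    fun i j _ hij => absurd hij (Subsingleton.elim j i).not_gt⟩

theorem even_sum_card_filter [DecidableEq V] (χ : Sym2 V → ℕ) (S : Finset V) (m : ℕ) :
    Even (∑ u ∈ S, #{w ∈ S | w ≠ u ∧ χ s(u, w) = m}) := by
  let G : SimpleGraph S :=
    { Adj a b := a ≠ b ∧ χ s(a.1, b.1) = m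
      symm := ⟨fun a _ ⟨hne, hc⟩ => ⟨hne.symm, Sym2.eq_swap (a := a.1) ▸ hc⟩⟩
      loopless := ⟨fun _ h => h.1 rfl⟩ }
  have hdeg : ∀ u : S, G.degree u = #{w ∈ S | w ≠ u.1 ∧ χ s(u.1, w) = m} := by
    intro u
    rw [← G.card_neighborFinset_eq_degree, G.neighborFinset_eq_filter,
      ← card_map (Function.Embedding.subtype _)]
    congr 1
    ext w
    simp only [G, mem_map, mem_filter, mem_univ, true_and, Function.Embedding.coe_subtype]
    constructor
    · rintro ⟨w, ⟨hne, hc⟩, rfl⟩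
      exact ⟨w.2, fun h => hne (Subtype.ext h).symm, hc⟩
    · rintro ⟨hw, hne, hc⟩
      exact ⟨⟨w, hw⟩, ⟨fun h => hne (congrArg Subtype.val h).symm, hc⟩, rfl⟩
  rw [← sum_coe_sort S]
  simp_rw [← hdeg, G.sum_degrees_eq_twice_card_edges]
  exact even_two_mul _

theorem reachable_mem_of_closed {G : SimpleGraph V} {s : Set V} {a b : V}
    (hs : ∀ x y, G.Adj x y → x ∈ s → y ∈ s) (ha : a ∈ s) (h : G.Reachable a b) : b ∈ s := by
  rw [SimpleGraph.reachable_iff_reflTransGen] at h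
  induction h with
  | refl => exact ha
  | tail _ hxy ih => exact hs _ _ hxy ih

def avoidGraph (χ : Sym2 V → ℕ) (S : Finset V) (α β : ℕ) : SimpleGraph V where
  Adj a b := a ∈ S ∧ b ∈ S ∧ a ≠ b ∧ χ s(a, b) ≠ α ∧ χ s(a, b) ≠ β
  symm := ⟨fun a _ ⟨ha, hb, hab, h₁, h₂⟩ =>
    ⟨hb, ha, hab.symm, Sym2.eq_swap (a := a) ▸ h₁, Sym2.eq_swap (a := a) ▸ h₂⟩⟩
  loopless := ⟨fun _ h => h.2.2.1 rfl⟩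

namespace avoidGraph

variable {α β : ℕ} {v x y : V}

theorem adj_iff : (avoidGraph χ S α β).Adj x y ↔
    x ∈ S ∧ y ∈ S ∧ x ≠ y ∧ χ s(x, y) ≠ α ∧ χ s(x, y) ≠ β :=
  Iff.rfl

theorem color_of_not_reachable (hx : x ∈ S) (hy : y ∈ S)
    (h : ¬ (avoidGraph χ S α β).Reachable x y) : χ s(x, y) = α ∨ χ s(x, y) = β := by
  by_contra hc
  push Not at hc
  exact h (SimpleGraph.Adj.reachable <| adj_iff.mpr
    ⟨hx, hy, fun hxy => h (hxy ▸ SimpleGraph.Reachable.refl x), hc.1, hc.2⟩)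

theorem color_eq_of_reachable (hG : IsGallai χ S) {a a' : V} (hy : y ∈ S)
    (ha : (avoidGraph χ S α β).Reachable a a') (hay : ¬ (avoidGraph χ S α β).Reachable a y) :
    χ s(a, y) = χ s(a', y) := by
  rw [SimpleGraph.reachable_iff_reflTransGen] at ha
  induction ha with
  | refl => rfl
  | @tail b b' hab hbb' ih =>
    rw [← SimpleGraph.reachable_iff_reflTransGen] at hab
    have hb' := hab.trans hbb'.reachable
    obtain ⟨hb, hb'S, hne, h₁, h₂⟩ := adj_iff.mp hbb'
    have hby := color_of_not_reachable hb hy fun h => hay (hab.trans h)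
    have hb'y := color_of_not_reachable hb'S hy fun h => hay (hb'.trans h)
    have hbne : b ≠ y := fun h => hay (h ▸ hab)
    have hb'ne : b' ≠ y := fun h => hay (h ▸ hb')
    refine ih.trans ((hG.eq_or_eq_of_ne hb hb'S hy hne hbne hb'ne ?_).resolve_left ?_).symm
    · rintro h; rcases hby with h' | h' <;> simp_all
    · rintro h; rcases hb'y with h' | h' <;> simp_all

theorem not_reachable_of_forall_color (hv : v ∈ S)
    (h : ∀ w ∈ S, w ≠ v → χ s(v, w) = α ∨ χ s(v, w) = β) {w : V} (hw : w ≠ v) :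
    ¬ (avoidGraph χ S α β).Reachable v w := fun hr =>
  hw <| reachable_mem_of_closed (s := {v}) (fun a b hab ha => by
    obtain ⟨-, hb, hne, h₁, h₂⟩ := adj_iff.mp hab
    rw [Set.mem_singleton_iff] at ha ⊢
    subst ha
    by_contra hbv
    rcases h b hb hbv with h' | h' <;> contradiction) rfl hr

variable [DecidableEq V]

/-! The induction step of Gallai's theorem: `(α, β)` disconnects `S` and a vertex `v ∉ S` is added.
Call `w ∈ S` exotic if `χ s(v, w)` is neither `α` nor `β`. A component of `S` without exotic
vertices remains a component; otherwise all exotic vertices see `v` in one color `g`, and `v` is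
isolated by `(α, g)` or by `(β, g)`. -/

theorem not_reachable_insert (hv : v ∉ S) {z : V} (hz : z ∈ S)
    (h : ∀ w ∈ S, (avoidGraph χ S α β).Reachable z w → χ s(v, w) = α ∨ χ s(v, w) = β) :
    ¬ (avoidGraph χ (insert v S) α β).Reachable z v := fun hr =>
  hv (reachable_mem_of_closed (s := {t | t ∈ S ∧ (avoidGraph χ S α β).Reachable z t})
    (fun a b hab ⟨ha, hza⟩ => by
      obtain ⟨-, hb, hne, h₁, h₂⟩ := adj_iff.mp hab
      have hbS : b ∈ S := by
        rcases mem_insert.mp hb with rfl | hb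
        · rcases h a ha hza with h' | h' <;> rw [Sym2.eq_swap] at h' <;> contradiction
        · exact hb
      exact ⟨hbS, hza.trans (adj_iff.mpr ⟨ha, hbS, hne, h₁, h₂⟩).reachable⟩)
    ⟨hz, .refl z⟩ hr).1

theorem color_eq_of_exotic (hG : IsGallai χ (insert v S)) (hv : v ∉ S) {w w' : V}
    (hw : w ∈ S) (hw' : w' ∈ S) (hww' : ¬ (avoidGraph χ S α β).Reachable w w')
    (h : χ s(v, w) ≠ α ∧ χ s(v, w) ≠ β) (h' : χ s(v, w') ≠ α ∧ χ s(v, w') ≠ β) :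
    χ s(v, w) = χ s(v, w') := by
  by_contra hne
  have := hG.eq_or_eq_of_ne (mem_insert_self v S) (mem_insert_of_mem hw) (mem_insert_of_mem hw')
    (ne_of_mem_of_not_mem hw hv).symm (ne_of_mem_of_not_mem hw' hv).symm
    (fun h => hww' (h ▸ .refl w)) hne
  rcases color_of_not_reachable hw hw' hww' with h'' | h'' <;> rw [h''] at this <;> tauto

/-- Each component contains an exotic vertex `w`, and the triangle `v x w` forces `χ s(x, w)`. -/
theorem color_eq_of_not_reachable (hG : IsGallai χ (insert v S)) (hv : v ∉ S)
    (hexotic : ∀ z ∈ S, ∃ w ∈ S,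
      (avoidGraph χ S α β).Reachable z w ∧ χ s(v, w) ≠ α ∧ χ s(v, w) ≠ β)
    {x y : V} (hx : x ∈ S) (hy : y ∈ S) (hvx : χ s(v, x) = α ∨ χ s(v, x) = β)
    (hxy : ¬ (avoidGraph χ S α β).Reachable x y) : χ s(x, y) = χ s(v, x) := by
  obtain ⟨w, hw, hyw, hwα, hwβ⟩ := hexotic y hy
  have hxw : ¬ (avoidGraph χ S α β).Reachable x w := fun h => hxy (h.trans hyw.symm)
  have hne : χ s(v, x) ≠ χ s(v, w) := by rcases hvx with h | h <;> rw [h] <;> tauto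
  have hxw_color : χ s(x, w) = χ s(v, x) :=
    (hG.eq_or_eq_of_ne (mem_insert_self v S) (mem_insert_of_mem hx) (mem_insert_of_mem hw)
      (ne_of_mem_of_not_mem hx hv).symm (ne_of_mem_of_not_mem hw hv).symm
      (fun h => hxw (h ▸ .refl x)) hne).resolve_right fun h => by
        rcases color_of_not_reachable hx hw hxw with h' | h' <;> rw [h'] at h <;> tauto
  have := color_eq_of_reachable (hG.mono (subset_insert v S)) hx hyw
    fun h => hxy h.symm
  rw [Sym2.eq_swap, this, Sym2.eq_swap, hxw_color]

theorem eq_of_color_eq_of_color_eq (hG : IsGallai χ (insert v S)) (hv : v ∉ S)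
    (hexotic : ∀ z ∈ S, ∃ w ∈ S,
      (avoidGraph χ S α β).Reachable z w ∧ χ s(v, w) ≠ α ∧ χ s(v, w) ≠ β)
    {x y xα xβ : V} (hx : x ∈ S) (hy : y ∈ S) (hxy : ¬ (avoidGraph χ S α β).Reachable x y)
    (hxα : xα ∈ S) (hxβ : xβ ∈ S) (hα : χ s(v, xα) = α) (hβ : χ s(v, xβ) = β) : α = β := by
  by_cases hr : (avoidGraph χ S α β).Reachable xα xβ
  · obtain ⟨z, hz, hαz⟩ : ∃ z ∈ S, ¬ (avoidGraph χ S α β).Reachable xα z := by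
      by_cases h : (avoidGraph χ S α β).Reachable xα x
      · exact ⟨y, hy, fun h' => hxy (h.symm.trans h')⟩
      · exact ⟨x, hx, h⟩
    have h₁ := color_eq_of_not_reachable hG hv hexotic hxα hz (.inl hα) hαz
    have h₂ := color_eq_of_not_reachable hG hv hexotic hxβ hz (.inr hβ)
      fun h => hαz (hr.trans h)
    have := color_eq_of_reachable (hG.mono (subset_insert v S)) hz hr hαz
    rwa [h₁, h₂, hα, hβ] at this
  · have h₁ := color_eq_of_not_reachable hG hv hexotic hxα hxβ (.inl hα) hr
    have h₂ := color_eq_of_not_reachable hG hv hexotic hxβ hxα (.inr hβ) fun h => hr h.symm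
    rw [Sym2.eq_swap, h₂, hα, hβ] at h₁
    exact h₁.symm

theorem exists_isolating_color (hG : IsGallai χ (insert v S)) (hv : v ∉ S)
    (hexotic : ∀ z ∈ S, ∃ w ∈ S,
      (avoidGraph χ S α β).Reachable z w ∧ χ s(v, w) ≠ α ∧ χ s(v, w) ≠ β)
    {x y : V} (hx : x ∈ S) (hy : y ∈ S) (hxy : ¬ (avoidGraph χ S α β).Reachable x y) :
    ∃ g, (∀ w ∈ S, χ s(v, w) = α ∨ χ s(v, w) = g) ∨ (∀ w ∈ S, χ s(v, w) = β ∨ χ s(v, w) = g) := by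
  obtain ⟨w₀, hw₀, hxw₀, hw₀e⟩ := hexotic x hx
  obtain ⟨w₁, hw₁, hyw₁, hw₁e⟩ := hexotic y hy
  have h₀₁ : ¬ (avoidGraph χ S α β).Reachable w₀ w₁ := fun h =>
    hxy ((hxw₀.trans h).trans hyw₁.symm)
  have hg : ∀ w ∈ S, χ s(v, w) ≠ α → χ s(v, w) ≠ β → χ s(v, w) = χ s(v, w₀) := by
    intro w hw hwα hwβ
    by_cases h₀ : (avoidGraph χ S α β).Reachable w₀ w
    · rw [color_eq_of_exotic hG hv hw hw₁ (fun h => h₀₁ (h₀.trans h)) ⟨hwα, hwβ⟩ hw₁e,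
        color_eq_of_exotic hG hv hw₀ hw₁ h₀₁ hw₀e hw₁e]
    · exact color_eq_of_exotic hG hv hw hw₀ (fun h => h₀ h.symm) ⟨hwα, hwβ⟩ hw₀e
  refine ⟨χ s(v, w₀), ?_⟩
  by_contra! ⟨⟨xβ, hxβ, hxβα, hxβg⟩, ⟨xα, hxα, hxαβ, hxαg⟩⟩
  have hβ : χ s(v, xβ) = β := by_contra fun h => hxβg (hg xβ hxβ hxβα h)
  have hα : χ s(v, xα) = α := by_contra fun h => hxαg (hg xα hxα h hxαβ)
  exact hxβα (hβ.trans (eq_of_color_eq_of_color_eq hG hv hexotic hx hy hxy hxα hxβ hα hβ).symm)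

theorem exists_not_reachable_insert (hG : IsGallai χ (insert v S)) (hv : v ∉ S) {x y : V}
    (hx : x ∈ S) (hy : y ∈ S) (hxy : ¬ (avoidGraph χ S α β).Reachable x y) :
    ∃ α' β', ∃ a ∈ insert v S, ∃ b ∈ insert v S,
      ¬ (avoidGraph χ (insert v S) α' β').Reachable a b := by
  by_cases hcase : ∃ z ∈ S, ∀ w ∈ S,
      (avoidGraph χ S α β).Reachable z w → χ s(v, w) = α ∨ χ s(v, w) = β
  · obtain ⟨z, hz, h⟩ := hcase
    exact ⟨α, β, z, mem_insert_of_mem hz, v, mem_insert_self v S, not_reachable_insert hv hz h⟩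
  push Not at hcase
  have hxv : x ≠ v := ne_of_mem_of_not_mem hx hv
  obtain ⟨g, h | h⟩ := exists_isolating_color hG hv hcase hx hy hxy
  · exact ⟨α, g, v, mem_insert_self v S, x, mem_insert_of_mem hx,
      not_reachable_of_forall_color (mem_insert_self v S)
        (fun w hw hwv => h w ((mem_insert.mp hw).resolve_left hwv)) hxv⟩
  · exact ⟨β, g, v, mem_insert_self v S, x, mem_insert_of_mem hx,
      not_reachable_of_forall_color (mem_insert_self v S)
        (fun w hw hwv => h w ((mem_insert.mp hw).resolve_left hwv)) hxv⟩

end avoidGraph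

/-- Gallai's theorem. -/
theorem IsGallai.exists_not_reachable [DecidableEq V] (hG : IsGallai χ S) (hS : 2 ≤ #S) :
    ∃ α β, ∃ x ∈ S, ∃ y ∈ S, ¬ (avoidGraph χ S α β).Reachable x y := by
  induction S using Finset.induction_on with
  | empty => simp at hS
  | insert v S hv ih =>
    by_cases hS' : 2 ≤ #S
    · obtain ⟨α, β, x, hx, y, hy, hxy⟩ := ih (hG.mono (subset_insert v S)) hS'
      exact avoidGraph.exists_not_reachable_insert hG hv hx hy hxy
    rw [card_insert_of_notMem hv] at hS
    obtain ⟨w, rfl⟩ := card_eq_one.mp (show #S = 1 by omega)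
    refine ⟨χ s(v, w), χ s(v, w), v, mem_insert_self v _, w, by simp,
      avoidGraph.not_reachable_of_forall_color (mem_insert_self v _) ?_ fun h => hv (by simp [h])⟩
    intro u hu huv
    obtain rfl : u = w := by simpa [huv] using hu
    exact .inl rfl

/-- A pair of colors `(α, β)` such that the edges of `S` avoiding both colors do not connect `S`.
Its components are the parts of a Gallai partition, and `α`, `β` are the only colors between
parts. -/
structure GallaiPartition (χ : Sym2 V → ℕ) (S : Finset V) where
  α : ℕ
  β : ℕ
  exists_not_reachable : ∃ x ∈ S, ∃ y ∈ S, ¬ (avoidGraph χ S α β).Reachable x y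

theorem IsGallai.nonempty_gallaiPartition [DecidableEq V] (hG : IsGallai χ S) (hS : 2 ≤ #S) :
    Nonempty (GallaiPartition χ S) :=
  let ⟨α, β, h⟩ := hG.exists_not_reachable hS
  ⟨⟨α, β, h⟩⟩

namespace GallaiPartition

variable (P : GallaiPartition χ S) {u w x y : V} {m : ℕ}

open Classical in
noncomputable def part (u : V) : Finset V :=
  {w ∈ S | (avoidGraph χ S P.α P.β).Reachable u w}

theorem mem_part : w ∈ P.part u ↔ w ∈ S ∧ (avoidGraph χ S P.α P.β).Reachable u w := by
  simp [part]

theorem part_subset : P.part u ⊆ S := fun _ h => (P.mem_part.mp h).1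

theorem mem_part_self (hu : u ∈ S) : u ∈ P.part u := P.mem_part.mpr ⟨hu, .refl u⟩

theorem ne_of_not_mem_part (hu : u ∈ S) (h : w ∉ P.part u) : u ≠ w :=
  fun huw => h (huw ▸ P.mem_part_self hu)

theorem exists_not_mem_part (u : V) : ∃ w ∈ S, w ∉ P.part u := by
  obtain ⟨x, hx, y, hy, hxy⟩ := P.exists_not_reachable
  by_cases hux : (avoidGraph χ S P.α P.β).Reachable u x
  · exact ⟨y, hy, fun h => hxy (hux.symm.trans (P.mem_part.mp h).2)⟩
  · exact ⟨x, hx, fun h => hux (P.mem_part.mp h).2⟩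

theorem disjoint_part (hw : w ∈ S) (h : w ∉ P.part u) :
    Disjoint (P.part u) (P.part w) :=
  disjoint_left.mpr fun _ hx hx' =>
    h (P.mem_part.mpr ⟨hw, (P.mem_part.mp hx).2.trans (P.mem_part.mp hx').2.symm⟩)

theorem color_mem (hu : u ∈ S) (hw : w ∈ S) (h : w ∉ P.part u) :
    χ s(u, w) = P.α ∨ χ s(u, w) = P.β :=
  avoidGraph.color_of_not_reachable hu hw fun hr => h (P.mem_part.mpr ⟨hw, hr⟩)

theorem color_eq (hG : IsGallai χ S) (hw : w ∈ S) (h : w ∉ P.part u)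
    (hx : x ∈ P.part u) (hy : y ∈ P.part w) : χ s(x, y) = χ s(u, w) := by
  have huw : ¬ (avoidGraph χ S P.α P.β).Reachable u w := fun hr => h (P.mem_part.mpr ⟨hw, hr⟩)
  obtain ⟨hxS, hux⟩ := P.mem_part.mp hx
  obtain ⟨-, hwy⟩ := P.mem_part.mp hy
  have h₁ := avoidGraph.color_eq_of_reachable hG hw hux huw
  have h₂ := avoidGraph.color_eq_of_reachable hG hxS hwy fun hr => huw (hux.trans hr.symm)
  rw [h₁, Sym2.eq_swap, ← h₂, Sym2.eq_swap]

theorem not_mem_part_comm (hw : w ∈ S) (h : w ∉ P.part u) : u ∉ P.part w :=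
  fun h' => h (P.mem_part.mpr ⟨hw, (P.mem_part.mp h').2.symm⟩)

theorem hasOrderableCliqueIn_of_part (hG : IsGallai χ S) {p : ℕ}
    (h : HasOrderableCliqueIn χ (P.part u) p) : HasOrderableCliqueIn χ S (p + 1) := by
  obtain ⟨w, hw, hwu⟩ := P.exists_not_mem_part u
  refine h.cons hw P.part_subset hwu fun x hx y hy => ?_
  rw [Sym2.eq_swap (a := w), Sym2.eq_swap (a := w) (b := y)]
  exact (P.color_eq hG hw hwu hx (P.mem_part_self hw)).trans
    (P.color_eq hG hw hwu hy (P.mem_part_self hw)).symm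

variable [DecidableEq V]

noncomputable def colorClass (u : V) (m : ℕ) : Finset V := {w ∈ S \ P.part u | χ s(u, w) = m}

theorem mem_colorClass : w ∈ P.colorClass u m ↔ w ∈ S ∧ w ∉ P.part u ∧ χ s(u, w) = m := by
  simp [colorClass, and_assoc]

theorem colorClass_subset : P.colorClass u m ⊆ S := fun _ h => (P.mem_colorClass.mp h).1

theorem not_mem_colorClass_self (hu : u ∈ S) : u ∉ P.colorClass u m :=
  fun h => (P.mem_colorClass.mp h).2.1 (P.mem_part_self hu)

theorem mem_colorClass_color (hw : w ∈ S) (h : w ∉ P.part u) : w ∈ P.colorClass u (χ s(u, w)) :=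
  P.mem_colorClass.mpr ⟨hw, h, rfl⟩

theorem part_subset_colorClass (hG : IsGallai χ S) (hu : u ∈ S) (hw : w ∈ P.colorClass u m) :
    P.part w ⊆ P.colorClass u m := by
  obtain ⟨hwS, hwu, rfl⟩ := P.mem_colorClass.mp hw
  intro x hx
  refine P.mem_colorClass.mpr ⟨P.part_subset hx, fun hxu => hwu ?_, ?_⟩
  · exact P.mem_part.mpr ⟨hwS, (P.mem_part.mp hxu).2.trans (P.mem_part.mp hx).2.symm⟩
  · exact P.color_eq hG hwS hwu (P.mem_part_self hu) hx

theorem card_le_card_part_add_card_colorClass (hu : u ∈ S) :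
    #S ≤ #(P.part u) + #(P.colorClass u P.α) + #(P.colorClass u P.β) := by
  have hcover : S ⊆ P.part u ∪ P.colorClass u P.α ∪ P.colorClass u P.β := by
    intro w hw
    by_cases h : w ∈ P.part u
    · simp [h]
    · rcases P.color_mem hu hw h with hc | hc <;> simp [P.mem_colorClass, hw, h, hc]
  exact (card_le_card hcover).trans ((card_union_le _ _).trans (by grw [card_union_le]))

theorem card_part_add_card_part_le (hG : IsGallai χ S) (hu : u ∈ S) (hx : x ∈ P.colorClass u m)
    (hy : y ∈ P.colorClass u m) (hxy : y ∉ P.part x) :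
    #(P.part x) + #(P.part y) ≤ #(P.colorClass u m) := by
  rw [← card_union_of_disjoint (P.disjoint_part (P.colorClass_subset hy) hxy)]
  exact card_le_card (union_subset (P.part_subset_colorClass hG hu hx)
    (P.part_subset_colorClass hG hu hy))

theorem hasOrderableCliqueIn_of_subset_colorClass {p : ℕ} {R T : Finset V} (hu : u ∈ S)
    (huR : u ∈ R) (hTR : T ⊆ R) (hT : T ⊆ P.colorClass u m) (h : HasOrderableCliqueIn χ T p) :
    HasOrderableCliqueIn χ R (p + 1) :=
  h.cons huR hTR (fun huT => P.not_mem_colorClass_self hu (hT huT)) fun x hx y hy => by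
    rw [(P.mem_colorClass.mp (hT hx)).2.2, (P.mem_colorClass.mp (hT hy)).2.2]

theorem exists_color_ne (h : #(P.part u) + #(P.colorClass u m) < #S) :
    ∃ y ∈ S, y ∉ P.part u ∧ χ s(u, y) ≠ m := by
  by_contra! hall
  refine h.not_ge ((card_le_card fun y hy => ?_).trans (card_union_le _ _))
  by_cases hyu : y ∈ P.part u
  · exact mem_union_left _ hyu
  · exact mem_union_right _ (P.mem_colorClass.mpr ⟨hy, hyu, hall y hy hyu⟩)

/-- `u`, `x`, `y` lie in distinct parts, and the triangle they span is not rainbow. -/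
theorem exists_colorClass_two_parts (hG : IsGallai χ S) (hu : u ∈ S) (hx : x ∈ S) (hy : y ∈ S)
    (hxu : x ∉ P.part u) (hyu : y ∉ P.part u) (hxy : χ s(u, x) ≠ χ s(u, y)) :
    ∃ a ∈ S, ∃ m, ∃ b ∈ P.colorClass a m, ∃ c ∈ P.colorClass a m, c ∉ P.part b := by
  have hyx : y ∉ P.part x := fun h =>
    hxy (P.color_eq hG hx hxu (P.mem_part_self hu) h).symm
  rcases hG.eq_or_eq_of_ne hu hx hy (P.ne_of_not_mem_part hu hxu) (P.ne_of_not_mem_part hu hyu)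
    (P.ne_of_not_mem_part hx hyx) hxy with h | h
  · refine ⟨x, hx, χ s(x, u), u, P.mem_colorClass_color hu (P.not_mem_part_comm hx hxu), y,
      P.mem_colorClass.mpr ⟨hy, hyx, ?_⟩, hyu⟩
    rw [h, Sym2.eq_swap]
  · refine ⟨y, hy, χ s(y, u), u, P.mem_colorClass_color hu (P.not_mem_part_comm hy hyu), x,
      P.mem_colorClass.mpr ⟨hx, P.not_mem_part_comm hy hyx, ?_⟩, hxu⟩
    rw [Sym2.eq_swap, h, Sym2.eq_swap]

end GallaiPartition

/-- If the sets of size `N` all contain an orderable `K_p`, then a Gallai partition of `S`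
without an orderable `K_{p+1}` has parts and color classes of size `< N`. Every part then has
at least `#S - 2 (N - 1)` vertices, while some color class contains two parts. -/
theorem IsGallai.hasOrderableCliqueIn_succ [DecidableEq V] (hG : IsGallai χ S) {N p : ℕ}
    (hN : ∀ T ⊆ S, N ≤ #T → HasOrderableCliqueIn χ T p) (hS₂ : 2 ≤ #S)
    (hS : 5 * (N - 1) < 2 * #S) : HasOrderableCliqueIn χ S (p + 1) := by
  obtain ⟨P⟩ := hG.nonempty_gallaiPartition hS₂
  by_contra hno
  have hpart : ∀ u, #(P.part u) < N := fun u => by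
    by_contra! h
    exact hno (P.hasOrderableCliqueIn_of_part hG (hN _ P.part_subset h))
  have hcls : ∀ u ∈ S, ∀ m, #(P.colorClass u m) < N := fun u hu m => by
    by_contra! h
    exact hno (P.hasOrderableCliqueIn_of_subset_colorClass hu hu P.colorClass_subset subset_rfl
      (hN _ P.colorClass_subset h))
  have hlarge : ∀ u ∈ S, #S ≤ #(P.part u) + 2 * (N - 1) := fun u hu => by
    have := P.card_le_card_part_add_card_colorClass hu
    have := hcls u hu P.α
    have := hcls u hu P.β
    omega
  obtain ⟨u, hu⟩ := card_pos.mp (show 0 < #S by omega)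
  obtain ⟨x, hx, hxu⟩ := P.exists_not_mem_part u
  obtain ⟨y, hy, hyu, hxy⟩ := P.exists_color_ne (u := u) (m := χ s(u, x)) (by
    have := hpart u
    have := hcls u hu (χ s(u, x))
    omega)
  obtain ⟨a, ha, m, b, hb, c, hc, hbc⟩ :=
    P.exists_colorClass_two_parts hG hu hx hy hxu hyu (Ne.symm hxy)
  have := P.card_part_add_card_part_le hG ha hb hc hbc
  have := hlarge b (P.colorClass_subset hb)
  have := hlarge c (P.colorClass_subset hc)
  have := hcls a ha m
  omega

theorem IsGallai.hasOrderableCliqueIn_two [DecidableEq V] (hG : IsGallai χ S) (hS : 2 ≤ #S) :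
    HasOrderableCliqueIn χ S 2 :=
  hG.hasOrderableCliqueIn_succ (N := 1) (fun _ _ hT => hasOrderableCliqueIn_one (card_pos.mp hT))
    hS (by omega)

theorem IsGallai.hasOrderableCliqueIn_three [DecidableEq V] (hG : IsGallai χ S) (hS : 3 ≤ #S) :
    HasOrderableCliqueIn χ S 3 :=
  hG.hasOrderableCliqueIn_succ (N := 2) (fun _ hT => (hG.mono hT).hasOrderableCliqueIn_two)
    (by omega) (by omega)

theorem IsGallai.hasOrderableCliqueIn_four [DecidableEq V] (hG : IsGallai χ S) (hS : 6 ≤ #S) :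
    HasOrderableCliqueIn χ S 4 :=
  hG.hasOrderableCliqueIn_succ (N := 3) (fun _ hT => (hG.mono hT).hasOrderableCliqueIn_three)
    (by omega) (by omega)

namespace GallaiPartition

variable [DecidableEq V] (P : GallaiPartition χ S) {u x y z : V} {m : ℕ}

/-! In the following lemmas every vertex `x` of the color class `K = P.colorClass u m` sees at
most two vertices of `K` in each color, as happens when `K` has no orderable `K_4`. -/

theorem card_part_le_two (hG : IsGallai χ S) (hu : u ∈ S)
    (hK : ∀ x ∈ P.colorClass u m, ∀ m', #(P.colorClass x m' ∩ P.colorClass u m) ≤ 2)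
    (hx : x ∈ P.colorClass u m) (hy : y ∈ P.colorClass u m) (hxy : y ∉ P.part x) :
    #(P.part y) ≤ 2 :=
  (card_le_card (subset_inter (P.part_subset_colorClass hG (P.colorClass_subset hx)
    (P.mem_colorClass_color (P.colorClass_subset hy) hxy))
    (P.part_subset_colorClass hG hu hy))).trans (hK x hx _)

theorem card_part_lt_two (hG : IsGallai χ S) (hu : u ∈ S)
    (hK : ∀ x ∈ P.colorClass u m, ∀ m', #(P.colorClass x m' ∩ P.colorClass u m) ≤ 2)
    (hx : x ∈ P.colorClass u m) (hy : y ∈ P.colorClass u m) (hz : z ∈ P.colorClass u m)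
    (hxy : y ∉ P.part x) (hxz : z ∉ P.part x) (hyz : z ∉ P.part y) (hc : χ s(x, z) = χ s(x, y)) :
    #(P.part y) < 2 := by
  have hsub : insert z (P.part y) ⊆ P.colorClass x (χ s(x, y)) ∩ P.colorClass u m :=
    insert_subset (mem_inter.mpr ⟨P.mem_colorClass.mpr ⟨P.colorClass_subset hz, hxz, hc⟩, hz⟩)
      (subset_inter (P.part_subset_colorClass hG (P.colorClass_subset hx)
        (P.mem_colorClass_color (P.colorClass_subset hy) hxy)) (P.part_subset_colorClass hG hu hy))
  have := (card_le_card hsub).trans (hK x hx _)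
  rw [card_insert_of_notMem hyz] at this
  omega

theorem color_eq_of_two_le_card_part (hG : IsGallai χ S) (hu : u ∈ S)
    (hK : ∀ x ∈ P.colorClass u m, ∀ m', #(P.colorClass x m' ∩ P.colorClass u m) ≤ 2)
    (hy : y ∈ P.colorClass u m) (hy₂ : 2 ≤ #(P.part y)) (hx : x ∈ P.colorClass u m)
    (hz : z ∈ P.colorClass u m) (hxy : x ∉ P.part y) (hzy : z ∉ P.part y) :
    χ s(y, x) = χ s(y, z) := by
  have hxS := P.colorClass_subset hx
  have hyS := P.colorClass_subset hy
  have hzS := P.colorClass_subset hz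
  by_cases hzx : z ∈ P.part x
  · exact (P.color_eq hG hxS hxy (P.mem_part_self hyS) hzx).symm
  by_contra hne
  rcases hG.eq_or_eq_of_ne hyS hxS hzS (P.ne_of_not_mem_part hyS hxy)
      (P.ne_of_not_mem_part hyS hzy) (P.ne_of_not_mem_part hxS hzx) hne with h | h
  · refine (P.card_part_lt_two hG hu hK hx hy hz (P.not_mem_part_comm hxS hxy) hzx hzy
      ?_).not_ge hy₂
    rw [h, Sym2.eq_swap]
  · refine (P.card_part_lt_two hG hu hK hz hy hx (P.not_mem_part_comm hzS hzy)
      (P.not_mem_part_comm hzS hzx) hxy ?_).not_ge hy₂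
    rw [Sym2.eq_swap, h, Sym2.eq_swap]

theorem card_colorClass_le (hG : IsGallai χ S) (hu : u ∈ S)
    (hK : ∀ x ∈ P.colorClass u m, ∀ m', #(P.colorClass x m' ∩ P.colorClass u m) ≤ 2)
    (hy : y ∈ P.colorClass u m) (hy₂ : 2 ≤ #(P.part y)) :
    #(P.colorClass u m) ≤ #(P.part y) + 2 := by
  by_cases h : P.colorClass u m ⊆ P.part y
  · exact (card_le_card h).trans (Nat.le_add_right _ _)
  obtain ⟨x, hx, hxy⟩ := not_subset.mp h
  have hsub : P.colorClass u m ⊆ P.part y ∪ (P.colorClass y (χ s(y, x)) ∩ P.colorClass u m) := by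
    intro z hz
    by_cases hzy : z ∈ P.part y
    · exact mem_union_left _ hzy
    · refine mem_union_right _ (mem_inter.mpr ⟨P.mem_colorClass.mpr ⟨P.colorClass_subset hz, hzy,
        (P.color_eq_of_two_le_card_part hG hu hK hy hy₂ hx hz hxy hzy).symm⟩, hz⟩)
  exact (card_le_card hsub).trans ((card_union_le _ _).trans (by grw [hK y hy]))

/-- Every other vertex sees a part of size at least three in a color in which it sees nothing
else; in a Gallai coloring this forces the whole complement of the part into one color
class. -/
theorem exists_subset_part_union_colorClass (hG : IsGallai χ S)
    (hK : ∀ u ∈ S, ∀ m, ∀ x ∈ P.colorClass u m, ∀ m',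
      #(P.colorClass x m' ∩ P.colorClass u m) ≤ 2)
    (hx : x ∈ S) (hx₃ : 2 < #(P.part x)) : ∃ m, S ⊆ P.part x ∪ P.colorClass x m := by
  have hcls : ∀ h ∈ S, h ∉ P.part x → P.colorClass h (χ s(h, x)) ⊆ P.part x := by
    intro h hh hhx h' hh'
    by_contra hh'x
    exact hx₃.not_ge (P.card_part_le_two hG hh (hK h hh _) hh'
      (P.mem_colorClass_color hx (P.not_mem_part_comm hh hhx))
      (P.not_mem_part_comm (P.colorClass_subset hh') hh'x))
  have hcolor : ∀ h ∈ S, h ∉ P.part x → ∀ h' ∈ S, h' ∉ P.part x → χ s(x, h) = χ s(x, h') := by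
    intro h hh hhx h' hh' hh'x
    by_cases hhh' : h' ∈ P.part h
    · exact (P.color_eq hG hh hhx (P.mem_part_self hx) hhh').symm
    rcases hG x hx h hh h' hh' (P.ne_of_not_mem_part hx hhx) (P.ne_of_not_mem_part hx hh'x)
      (P.ne_of_not_mem_part hh hhh') with e | e | e
    · exact e
    · refine absurd (hcls h hh hhx (P.mem_colorClass.mpr ⟨hh', hhh', ?_⟩)) hh'x
      rw [← e, Sym2.eq_swap]
    · refine absurd (hcls h' hh' hh'x (P.mem_colorClass.mpr
        ⟨hh, P.not_mem_part_comm hh' hhh', ?_⟩)) hhx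
      rw [Sym2.eq_swap, ← e, Sym2.eq_swap]
  obtain ⟨h, hh, hhx⟩ := P.exists_not_mem_part x
  refine ⟨χ s(x, h), fun w hw => ?_⟩
  by_cases hwx : w ∈ P.part x
  · exact mem_union_left _ hwx
  · exact mem_union_right _ (P.mem_colorClass.mpr ⟨hw, hwx, hcolor w hw hwx h hh hhx⟩)

/-- With eleven vertices, a part of size two lies in a color class of size five; that class has
only singleton parts, and any of them sees the part of size two inside a color class of size
five again. -/
theorem card_part_le_one (hG : IsGallai χ S)
    (hK : ∀ u ∈ S, ∀ m, ∀ x ∈ P.colorClass u m, ∀ m',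
      #(P.colorClass x m' ∩ P.colorClass u m) ≤ 2)
    (hS : #S = 11) (hcls : ∀ u ∈ S, ∀ m, #(P.colorClass u m) ≤ 5)
    (hpart : ∀ u ∈ S, #(P.part u) ≤ 2) (hy : y ∈ S) : #(P.part y) ≤ 1 := by
  by_contra! hy₂
  have hbig : ∀ m, 5 ≤ #(P.colorClass y m) → False := by
    intro m hm
    obtain ⟨z, hz⟩ := card_pos.mp (show 0 < #(P.colorClass y m) by omega)
    have hzS := P.colorClass_subset hz
    have hz₁ : #(P.part z) ≤ 1 := by
      by_contra! hz₂
      have := P.card_colorClass_le hG hy (hK y hy m) hz hz₂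
      have := hpart z hzS
      omega
    have hyz := P.not_mem_part_comm hzS (P.mem_colorClass.mp hz).2.1
    have hzy : 5 ≤ #(P.colorClass z (χ s(z, y))) := by
      have := P.card_le_card_part_add_card_colorClass hzS
      have := hcls z hzS P.α
      have := hcls z hzS P.β
      rcases P.color_mem hzS hy hyz with e | e <;> rw [e] <;> omega
    have := P.card_colorClass_le hG hzS (hK z hzS _) (P.mem_colorClass_color hy hyz) hy₂
    have := hpart y hy
    omega
  have := P.card_le_card_part_add_card_colorClass hy
  have := hpart y hy
  by_cases hα : 5 ≤ #(P.colorClass y P.α)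
  · exact hbig _ hα
  · exact hbig P.β (by omega)

/-- With singleton parts every vertex sees exactly five others in color `α`, which the handshake
lemma forbids on eleven vertices. -/
theorem not_forall_card_part_le_one (hS : #S = 11) (hcls : ∀ u ∈ S, ∀ m, #(P.colorClass u m) ≤ 5) :
    ¬ ∀ u ∈ S, #(P.part u) ≤ 1 := by
  intro hone
  have hdeg : ∀ u ∈ S, #{w ∈ S | w ≠ u ∧ χ s(u, w) = P.α} = 5 := by
    intro u hu
    have hpu : P.part u = {u} := eq_singleton_iff_unique_mem.mpr ⟨P.mem_part_self hu,
      fun w hw => card_le_one.mp (hone u hu) _ hw _ (P.mem_part_self hu)⟩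
    have hα : P.colorClass u P.α = {w ∈ S | w ≠ u ∧ χ s(u, w) = P.α} := by
      ext w
      simp [P.mem_colorClass, hpu]
    have hcover := P.card_le_card_part_add_card_colorClass hu
    rw [hpu, card_singleton, hS] at hcover
    have := hcls u hu P.β
    rw [← hα]
    have := hcls u hu P.α
    omega
  have := even_sum_card_filter χ S P.α
  rw [sum_congr rfl hdeg, sum_const, hS] at this
  exact absurd this (by decide)

end GallaiPartition

/-- Parts of size `≥ 6`, color classes of size `≥ 6` and color classes containing a vertex that
sees three of its members in one color all yield an orderable `K_5`; without them every part is a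
singleton. -/
theorem IsGallai.hasOrderableCliqueIn_five [DecidableEq V] (hG : IsGallai χ S) (hS : 11 ≤ #S) :
    HasOrderableCliqueIn χ S 5 := by
  obtain ⟨T, hTS, hT⟩ := exists_subset_card_eq hS
  refine .mono ?_ hTS
  replace hG := hG.mono hTS
  obtain ⟨P⟩ := hG.nonempty_gallaiPartition (by omega)
  by_contra hno
  have hpart : ∀ u, #(P.part u) ≤ 5 := fun u => by
    by_contra! h
    exact hno (P.hasOrderableCliqueIn_of_part hG
      ((hG.mono P.part_subset).hasOrderableCliqueIn_four h))
  have hcls : ∀ u ∈ T, ∀ m, #(P.colorClass u m) ≤ 5 := fun u hu m => by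
    by_contra! h
    exact hno (P.hasOrderableCliqueIn_of_subset_colorClass hu hu P.colorClass_subset subset_rfl
      ((hG.mono P.colorClass_subset).hasOrderableCliqueIn_four h))
  have hK : ∀ u ∈ T, ∀ m, ∀ x ∈ P.colorClass u m, ∀ m',
      #(P.colorClass x m' ∩ P.colorClass u m) ≤ 2 := by
    intro u hu m x hx m'
    by_contra! h
    exact hno (P.hasOrderableCliqueIn_of_subset_colorClass hu hu P.colorClass_subset subset_rfl
      (P.hasOrderableCliqueIn_of_subset_colorClass (P.colorClass_subset hx) hx inter_subset_right
        inter_subset_left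
        ((hG.mono (inter_subset_left.trans P.colorClass_subset)).hasOrderableCliqueIn_three h)))
  have hsmall : ∀ u ∈ T, #(P.part u) ≤ 2 := fun u hu => by
    by_contra! h
    obtain ⟨m, hm⟩ := P.exists_subset_part_union_colorClass hG hK hu h
    have := (card_le_card hm).trans (card_union_le _ _)
    have := hpart u
    have := hcls u hu m
    omega
  exact P.not_forall_card_part_le_one hT hcls fun u hu =>
    P.card_part_le_one hG hK hT hcls hsmall hu

theorem IsGallai.hasOrderableCliqueIn_six [DecidableEq V] (hG : IsGallai χ S) (hS : 26 ≤ #S) :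
    HasOrderableCliqueIn χ S 6 :=
  hG.hasOrderableCliqueIn_succ (N := 11) (fun _ hT => (hG.mono hT).hasOrderableCliqueIn_five)
    (by omega) (by omega)

end Gallai

/-- The coloring of `K_5` by a pentagon (color `0`) and its complementary pentagram
(color `1`). -/
def pentagonColor (a b : Fin 5) : ℕ := if a - b = 1 ∨ b - a = 1 then 0 else 1

theorem pentagonColor_comm : ∀ a b, pentagonColor a b = pentagonColor b a := by decide

theorem pentagonColor_le_one (a b : Fin 5) : pentagonColor a b ≤ 1 := by
  unfold pentagonColor
  split <;> omega

theorem pentagonColor_ne_of_eq : ∀ v a b c : Fin 5, v ≠ a → v ≠ b → v ≠ c → a ≠ b → a ≠ c →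
    b ≠ c → pentagonColor v a = pentagonColor v b → pentagonColor v a ≠ pentagonColor v c := by
  decide

/-- The pentagon coloring with every vertex blown up into a copy of itself in the fresh colors
`2, 3`. -/
def blowupColor (p q : Fin 5 × Fin 5) : ℕ :=
  if p.1 = q.1 then pentagonColor p.2 q.2 + 2 else pentagonColor p.1 q.1

theorem blowupColor_comm (p q : Fin 5 × Fin 5) : blowupColor p q = blowupColor q p := by
  unfold blowupColor
  rw [pentagonColor_comm p.2, pentagonColor_comm p.1]
  simp only [eq_comm]

def blowupColoring : Sym2 (Fin 5 × Fin 5) → ℕ := Sym2.lift ⟨blowupColor, blowupColor_comm⟩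

theorem isGallai_blowupColoring : IsGallai blowupColoring univ := by
  rintro ⟨a, a'⟩ - ⟨b, b'⟩ - ⟨c, c'⟩ - hab hac hbc
  simp only [blowupColoring, Sym2.lift_mk, blowupColor]
  have := pentagonColor_le_one
  by_cases h₁ : a = b <;> by_cases h₂ : a = c <;> by_cases h₃ : b = c <;> subst_vars <;>
    simp only [if_true, if_false, not_false_eq_true, *] at * <;> grind [pentagonColor_comm]

/-- In an orderable copy inside the blow-up, a vertex followed by at least three others is the
only one of the copy in its block: otherwise the later vertices all lie in its block and see it
in one color of the inner pentagon. -/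
theorem blowupColoring_fst_ne_of_lt {p : ℕ} {f : Fin p → Fin 5 × Fin 5} (hf : Function.Injective f)
    (hc : ∀ i j k, i < j → i < k → blowupColoring s(f i, f j) = blowupColoring s(f i, f k))
    {i j k l : Fin p} (hij : i < j) (hjk : j < k) (hkl : k < l) : (f i).1 ≠ (f j).1 := by
  intro hj
  simp only [blowupColoring, Sym2.lift_mk] at hc
  have hblock : ∀ n, i < n → (f i).1 = (f n).1 ∧
      pentagonColor (f i).2 (f n).2 = pentagonColor (f i).2 (f j).2 := fun n hn => by
    have := hc i j n hij hn
    unfold blowupColor at this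
    rw [if_pos hj] at this
    split_ifs at this with hn'
    · exact ⟨hn', by omega⟩
    · have := pentagonColor_le_one (f i).1 (f n).1
      omega
  have hsnd : ∀ {a b}, a ≠ b → (f a).1 = (f b).1 → (f a).2 ≠ (f b).2 := fun hab h₁ h₂ =>
    hab (hf (Prod.ext h₁ h₂))
  have hk := hblock k (hij.trans hjk)
  have hl := hblock l (hij.trans (hjk.trans hkl))
  exact pentagonColor_ne_of_eq _ _ _ _ (hsnd hij.ne hj) (hsnd (hij.trans hjk).ne hk.1)
    (hsnd (hij.trans (hjk.trans hkl)).ne hl.1) (hsnd hjk.ne (hj.symm.trans hk.1))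
    (hsnd (hjk.trans hkl).ne (hj.symm.trans hl.1)) (hsnd hkl.ne (hk.1.symm.trans hl.1))
    hk.2.symm hl.2.symm

/-- The first four vertices of an orderable `K_6` would lie in distinct blocks, and the first
would see the other three blocks in one color of the outer pentagon. -/
theorem not_hasOrderableCliqueIn_blowupColoring : ¬ HasOrderableCliqueIn blowupColoring univ 6 := by
  rintro ⟨f, -, hf, hc⟩
  have H : ∀ i j k l : Fin 6, i < j ∧ j < k ∧ k < l → (f i).1 ≠ (f j).1 :=
    fun _ _ _ _ h => blowupColoring_fst_ne_of_lt hf hc h.1 h.2.1 h.2.2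
  have h₀₁ := H 0 1 2 3 (by decide)
  have h₀₂ := H 0 2 3 4 (by decide)
  have h₀₃ := H 0 3 4 5 (by decide)
  have e₂ := hc 0 1 2 (by decide) (by decide)
  have e₃ := hc 0 1 3 (by decide) (by decide)
  simp only [blowupColoring, Sym2.lift_mk, blowupColor, if_neg h₀₁, if_neg h₀₂, if_neg h₀₃]
    at e₂ e₃
  exact pentagonColor_ne_of_eq _ _ _ _ h₀₁ h₀₂ h₀₃ (H 1 2 3 4 (by decide)) (H 1 3 4 5 (by decide))
    (H 2 3 4 5 (by decide)) e₂ e₃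

section

variable {n p : ℕ} {χ : Sym2 (Fin n) → ℕ}

theorem hasOrderableClique_iff_hasOrderableCliqueIn_univ :
    HasOrderableClique p n χ ↔ HasOrderableCliqueIn χ univ p := by
  constructor
  · rintro ⟨f, hf, π, hπ⟩
    refine ⟨f ∘ π.symm, fun _ => mem_univ _, hf.comp π.symm.injective, fun i j k hij hik => ?_⟩
    exact hπ _ _ _ (π.symm.injective.ne hij.ne) (π.symm.injective.ne hik.ne)
      (by simpa using hij) (by simpa using hik)
  · rintro ⟨f, -, hf, hc⟩
    exact ⟨f, hf, Equiv.refl _, fun i j k _ _ => hc i j k⟩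

theorem hasRainbowClique_three_iff_not_isGallai : HasRainbowClique 3 n χ ↔ ¬ IsGallai χ univ := by
  constructor
  · rintro ⟨f, hf, hr⟩ hG
    rcases hG (f 0) (mem_univ _) (f 1) (mem_univ _) (f 2) (mem_univ _) (hf.ne (by decide))
      (hf.ne (by decide)) (hf.ne (by decide)) with h | h | h
    · exact absurd (hr 0 1 0 2 (by decide) (by decide) h).2 (by decide)
    · exact absurd (hr 0 1 1 2 (by decide) (by decide) h).1 (by decide)
    · exact absurd (hr 0 2 1 2 (by decide) (by decide) h).1 (by decide)
  · intro hG
    simp only [IsGallai, not_forall, not_or] at hG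
    obtain ⟨x, -, y, -, z, -, hxy, hxz, hyz, h₁, h₂, h₃⟩ := hG
    refine ⟨![x, y, z], ?_, ?_⟩
    · intro i j h
      fin_cases i <;> fin_cases j <;> simp_all [eq_comm]
    · intro i j k l hij hkl h
      fin_cases i <;> fin_cases j <;> fin_cases k <;> fin_cases l <;> simp_all [eq_comm]

variable {W : Type*} [Fintype W] {ψ : Sym2 W → ℕ} {e : Fin n → W}

theorem HasOrderableCliqueIn.of_comp_map (he : Function.Injective e)
    (h : HasOrderableCliqueIn (ψ ∘ Sym2.map e) univ p) : HasOrderableCliqueIn ψ univ p := by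
  obtain ⟨f, -, hf, hc⟩ := h
  exact ⟨e ∘ f, fun _ => mem_univ _, he.comp hf, hc⟩

theorem IsGallai.comp_map (hG : IsGallai ψ univ) (he : Function.Injective e) :
    IsGallai (ψ ∘ Sym2.map e) univ :=
  fun x _ y _ z _ hxy hxz hyz =>
    hG (e x) (mem_univ _) (e y) (mem_univ _) (e z) (mem_univ _) (he.ne hxy) (he.ne hxz) (he.ne hyz)

end

end CanonicalRamsey

open CanonicalRamsey

/-- CR(6,3) = 26. -/
theorem CR_6_3 :
    (∀ χ : Sym2 (Fin 26) → ℕ, HasOrderableClique 6 26 χ ∨ HasRainbowClique 3 26 χ) ∧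
    (∃ χ : Sym2 (Fin 25) → ℕ,
      ¬ HasOrderableClique 6 25 χ ∧ ¬ HasRainbowClique 3 25 χ) := by
  let e : Fin 25 ≃ Fin 5 × Fin 5 := (finProdFinEquiv (m := 5) (n := 5)).symm
  refine ⟨fun χ => ?_, blowupColoring ∘ Sym2.map e, ?_, ?_⟩
  · rw [hasOrderableClique_iff_hasOrderableCliqueIn_univ, hasRainbowClique_three_iff_not_isGallai, or_iff_not_imp_right, not_not]
    exact fun hG => hG.hasOrderableCliqueIn_six (by simp)
  · rw [hasOrderableClique_iff_hasOrderableCliqueIn_univ]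
    exact fun h => not_hasOrderableCliqueIn_blowupColoring (h.of_comp_map e.injective)
  · rw [hasRainbowClique_three_iff_not_isGallai, not_not]
    exact isGallai_blowupColoring.comp_map e.injective
end

section
/- CR(3,4) = 7. That is: every edge-coloring of the complete graph K_7 (with arbitrarily many colors) contains an orderable copy of K_3 or a rainbow copy of K_4, and there exists an edge-coloring of K_6 containing neither an orderable K_3 nor a rainbow K_4. -/
open Finset

def IsProperEdgeColoring {V α : Type*} (χ : Sym2 V → α) : Prop :=
  ∀ v x y : V, v ≠ x → v ≠ y → x ≠ y → χ s(v, x) ≠ χ s(v, y)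

theorem IsProperEdgeColoring.disjoint_toFinset {V α : Type*} [DecidableEq V] {χ : Sym2 V → α}
    (hχ : IsProperEdgeColoring χ) {e e' : Sym2 V} (he : ¬e.IsDiag) (he' : ¬e'.IsDiag)
    (hne : e ≠ e') (h : χ e = χ e') : Disjoint e.toFinset e'.toFinset := by
  rw [Finset.disjoint_left]
  intro v hv hv'
  rw [Sym2.mem_toFinset, Sym2.mem_iff_exists] at hv hv'
  obtain ⟨x, rfl⟩ := hv
  obtain ⟨y, rfl⟩ := hv'
  rw [Sym2.mk_isDiag_iff] at he he'
  exact hχ v x y he he' (fun hxy => hne (hxy ▸ rfl)) h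

theorem hasOrderableClique_three_iff {n : ℕ} {χ : Sym2 (Fin n) → ℕ} :
    HasOrderableClique 3 n χ ↔ ¬IsProperEdgeColoring χ := by
  constructor
  · rintro ⟨f, hf, π, hπ⟩ hχ
    have hlt : ∀ i j : Fin 3, i < j → π (π.symm i) < π (π.symm j) := by simp
    have hne : ∀ i j : Fin 3, i ≠ j → f (π.symm i) ≠ f (π.symm j) :=
      fun i j h => hf.ne (π.symm.injective.ne h)
    exact hχ _ _ _ (hne 0 1 (by decide)) (hne 0 2 (by decide)) (hne 1 2 (by decide))
      (hπ _ _ _ (π.symm.injective.ne (by decide)) (π.symm.injective.ne (by decide))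
        (hlt 0 1 (by decide)) (hlt 0 2 (by decide)))
  · intro hχ
    simp only [IsProperEdgeColoring, not_forall, not_not] at hχ
    obtain ⟨v, x, y, hvx, hvy, hxy, h⟩ := hχ
    refine ⟨![v, x, y], ?_, Equiv.refl _, ?_⟩
    · intro i j hij
      fin_cases i <;> fin_cases j <;> simp_all
    · intro i j k hij hik hj hk
      simp only [Equiv.refl_apply] at hj hk
      fin_cases i <;> fin_cases j <;> fin_cases k <;> simp_all [Fin.lt_def]

theorem Sym2.exists_lt_eq_mk {α : Type*} [LinearOrder α] {e : Sym2 α} (he : ¬e.IsDiag) :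
    ∃ i j, i < j ∧ e = s(i, j) := by
  induction e using Sym2.ind with
  | _ i j =>
    rcases lt_or_gt_of_ne (Sym2.mk_isDiag_iff.not.mp he) with h | h
    · exact ⟨i, j, h, rfl⟩
    · exact ⟨j, i, h, Sym2.eq_swap⟩

theorem hasRainbowClique_iff {t n : ℕ} {χ : Sym2 (Fin n) → ℕ} :
    HasRainbowClique t n χ ↔ ∃ f : Fin t → Fin n, Function.Injective f ∧
      Set.InjOn (fun e : Sym2 (Fin t) => χ (e.map f)) {e | ¬e.IsDiag} := by
  constructor
  · rintro ⟨f, hf, hr⟩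
    refine ⟨f, hf, fun e he e' he' h => ?_⟩
    obtain ⟨i, j, hij, rfl⟩ := Sym2.exists_lt_eq_mk he
    obtain ⟨k, l, hkl, rfl⟩ := Sym2.exists_lt_eq_mk he'
    obtain ⟨rfl, rfl⟩ := hr i j k l hij hkl h
    rfl
  · rintro ⟨f, hf, hinj⟩
    refine ⟨f, hf, fun i j k l hij hkl h => ?_⟩
    have := hinj (Sym2.mk_isDiag_iff.not.mpr hij.ne) (Sym2.mk_isDiag_iff.not.mpr hkl.ne) h
    rcases Sym2.eq_iff.mp this with h' | ⟨rfl, rfl⟩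
    · exact h'
    · exact absurd (hij.trans hkl) (lt_irrefl _)

theorem choose_two_le_card_image_of_hasRainbowClique {t n : ℕ} {χ : Sym2 (Fin n) → ℕ}
    (h : HasRainbowClique t n χ) : t.choose 2 ≤ #(univ.image χ) := by
  obtain ⟨f, -, hinj⟩ := hasRainbowClique_iff.mp h
  have := card_le_card_of_injOn (s := (univ : Finset {e : Sym2 (Fin t) // ¬e.IsDiag}))
    (fun e => χ (e.1.map f)) (fun _ _ => mem_image_of_mem χ (mem_univ _))
    (fun e _ e' _ h => Subtype.ext (hinj e.2 e'.2 h))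
  rwa [card_univ, Sym2.card_subtype_not_diag, Fintype.card_fin] at this

theorem exists_color_eq_of_not_hasRainbowClique {t n : ℕ} {χ : Sym2 (Fin n) → ℕ}
    (h : ¬HasRainbowClique t n χ) {S : Finset (Fin n)} (hS : #S = t) :
    ∃ e e' : Sym2 (Fin n), ¬e.IsDiag ∧ ¬e'.IsDiag ∧ e ≠ e' ∧ χ e = χ e' ∧
      e.toFinset ⊆ S ∧ e'.toFinset ⊆ S := by
  set f := S.orderEmbOfFin hS
  simp only [hasRainbowClique_iff, Set.InjOn, not_exists, not_and, not_forall] at h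
  obtain ⟨e, he, e', he', hc, hne⟩ := h f f.injective
  have hsub : ∀ e : Sym2 (Fin t), (e.map f).toFinset ⊆ S := by
    intro e v hv
    obtain ⟨w, -, rfl⟩ := Sym2.mem_map.mp (Sym2.mem_toFinset.mp hv)
    exact S.orderEmbOfFin_mem hS w
  exact ⟨e.map f, e'.map f, (Sym2.isDiag_map f.injective).not.mpr he,
    (Sym2.isDiag_map f.injective).not.mpr he', (Sym2.map.injective f.injective).ne hne, hc,
    hsub e, hsub e'⟩

section SameColorGraph

variable {V α : Type*} (χ : Sym2 V → α)

def sameColorGraph : SimpleGraph {e : Sym2 V // ¬e.IsDiag} where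
  Adj e e' := e ≠ e' ∧ χ e = χ e'
  symm := ⟨fun _ _ h => ⟨h.1.symm, h.2.symm⟩⟩
  loopless := ⟨fun _ h => h.1 rfl⟩

variable [DecidableEq V] [DecidableEq α]

instance : DecidableRel (sameColorGraph χ).Adj :=
  fun _ _ => inferInstanceAs (Decidable (_ ∧ _))

variable [Fintype V] {χ}

/-- In a proper colouring an edge and its equally coloured edges form a matching. -/
theorem two_mul_degree_sameColorGraph_add_one_le (hχ : IsProperEdgeColoring χ)
    (e : {e : Sym2 V // ¬e.IsDiag}) :
    2 * ((sameColorGraph χ).degree e + 1) ≤ Fintype.card V := by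
  set M := insert e ((sameColorGraph χ).neighborFinset e)
  have hcolor : ∀ x ∈ M, χ x = χ e := by
    intro x hx
    rcases mem_insert.mp hx with rfl | hx
    · rfl
    · exact (((sameColorGraph χ).mem_neighborFinset e x).mp hx).2.symm
  have hdisj : (M : Set {e : Sym2 V // ¬e.IsDiag}).PairwiseDisjoint fun x => x.1.toFinset :=
    fun x hx y hy hxy => hχ.disjoint_toFinset x.2 y.2 (Subtype.coe_injective.ne hxy)
      ((hcolor x hx).trans (hcolor y hy).symm)
  calc 2 * ((sameColorGraph χ).degree e + 1) = ∑ x ∈ M, #x.1.toFinset := by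
        rw [sum_congr rfl fun x _ => Sym2.card_toFinset_of_not_isDiag _ x.2, sum_const,
          card_insert_of_notMem ((sameColorGraph χ).notMem_neighborFinset_self e),
          SimpleGraph.card_neighborFinset_eq_degree, smul_eq_mul, mul_comm]
    _ = #(M.biUnion fun x => x.1.toFinset) := (card_biUnion hdisj).symm
    _ ≤ Fintype.card V := card_le_univ _

theorem choose_four_le_card_edgeFinset_sameColorGraph (hχ : IsProperEdgeColoring χ)
    (h : ∀ S : Finset V, #S = 4 → ∃ e e' : Sym2 V, ¬e.IsDiag ∧ ¬e'.IsDiag ∧ e ≠ e' ∧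
      χ e = χ e' ∧ e.toFinset ⊆ S ∧ e'.toFinset ⊆ S) :
    (Fintype.card V).choose 4 ≤ #(sameColorGraph χ).edgeFinset := by
  let span : Sym2 {e : Sym2 V // ¬e.IsDiag} → Finset V :=
    Sym2.lift ⟨fun e e' => e.1.toFinset ∪ e'.1.toFinset, fun _ _ => union_comm _ _⟩
  rw [← card_univ, ← card_powersetCard]
  refine card_le_card_of_surjOn span fun S hS => ?_
  rw [mem_coe, mem_powersetCard_univ] at hS
  obtain ⟨e, e', he, he', hne, hc, heS, he'S⟩ := h S hS
  have hadj : (sameColorGraph χ).Adj ⟨e, he⟩ ⟨e', he'⟩ :=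
    ⟨Subtype.coe_injective.ne_iff.mp hne, hc⟩
  refine ⟨s(⟨e, he⟩, ⟨e', he'⟩), (sameColorGraph χ).mem_edgeFinset.mpr hadj, ?_⟩
  refine eq_of_subset_of_card_le (union_subset heS he'S) ?_
  simp only [span, Sym2.lift_mk]
  rw [hS, card_union_of_disjoint (hχ.disjoint_toFinset he he' hne hc),
    Sym2.card_toFinset_of_not_isDiag _ he, Sym2.card_toFinset_of_not_isDiag _ he']

/-- Double counting: each 4-set of vertices is spanned by an edge of `sameColorGraph χ`, and
every vertex of that graph has degree less than `|V| / 2`. -/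
theorem two_mul_choose_four_le (hχ : IsProperEdgeColoring χ)
    (h : ∀ S : Finset V, #S = 4 → ∃ e e' : Sym2 V, ¬e.IsDiag ∧ ¬e'.IsDiag ∧ e ≠ e' ∧
      χ e = χ e' ∧ e.toFinset ⊆ S ∧ e'.toFinset ⊆ S) :
    2 * (Fintype.card V).choose 4 ≤ (Fintype.card V).choose 2 * (Fintype.card V / 2 - 1) :=
  calc 2 * (Fintype.card V).choose 4 ≤ 2 * #(sameColorGraph χ).edgeFinset :=
        Nat.mul_le_mul_left 2 (choose_four_le_card_edgeFinset_sameColorGraph hχ h)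
    _ = ∑ e, (sameColorGraph χ).degree e :=
        (sameColorGraph χ).sum_degrees_eq_twice_card_edges.symm
    _ ≤ ∑ _e : {e : Sym2 V // ¬e.IsDiag}, (Fintype.card V / 2 - 1) :=
        sum_le_sum fun e _ => by have := two_mul_degree_sameColorGraph_add_one_le hχ e; omega
    _ = (Fintype.card V).choose 2 * (Fintype.card V / 2 - 1) := by
        rw [sum_const, card_univ, Sym2.card_subtype_not_diag, smul_eq_mul]

end SameColorGraph

theorem hasOrderableClique_three_or_hasRainbowClique_four_seven (χ : Sym2 (Fin 7) → ℕ) :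
    HasOrderableClique 3 7 χ ∨ HasRainbowClique 4 7 χ := by
  by_contra! h
  have := two_mul_choose_four_le (not_not.mp (hasOrderableClique_three_iff.not.mp h.1))
    fun S hS => exists_color_eq_of_not_hasRainbowClique h.2 hS
  simp [Nat.choose] at this

/-- Vertices `0, …, 4` are residues mod 5 and `5` is a point at infinity; colour class `c` is the
perfect matching `{{i, j} | i + j ≡ c} ∪ {{i, 5} | 2 i ≡ c}`. -/
def oneFactorizationK6 : Sym2 (Fin 6) → ℕ :=
  Sym2.lift ⟨fun i j =>
    if i = 5 then 2 * (j : ℕ) % 5 else if j = 5 then 2 * (i : ℕ) % 5 else (i + j : ℕ) % 5,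
    by decide⟩

theorem isProperEdgeColoring_oneFactorizationK6 : IsProperEdgeColoring oneFactorizationK6 := by
  unfold IsProperEdgeColoring
  decide

theorem card_image_oneFactorizationK6 : #(univ.image oneFactorizationK6) = 5 := by
  decide

/-- CR(3,4) = 7. -/
theorem CR_3_4 :
    (∀ χ : Sym2 (Fin 7) → ℕ, HasOrderableClique 3 7 χ ∨ HasRainbowClique 4 7 χ) ∧
    (∃ χ : Sym2 (Fin 6) → ℕ,
      ¬ HasOrderableClique 3 6 χ ∧ ¬ HasRainbowClique 4 6 χ) := by
  refine ⟨hasOrderableClique_three_or_hasRainbowClique_four_seven, oneFactorizationK6,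
    fun h => hasOrderableClique_three_iff.mp h isProperEdgeColoring_oneFactorizationK6,
    fun h => ?_⟩
  have := choose_two_le_card_image_of_hasRainbowClique h
  rw [card_image_oneFactorizationK6] at this
  exact absurd this (by decide)
end

section
/- CR(4,3) = 6. That is: every edge-coloring of the complete graph K_6 (with arbitrarily many colors) contains an orderable copy of K_4 or a rainbow copy of K_3, and there exists an edge-coloring of K_5 containing neither an orderable K_4 nor a rainbow K_3. -/
open Finset

section Stars

variable {V C : Type*} (χ : Sym2 V → C)

def IsMonochromaticStar (v : V) (S : Finset V) : Prop :=
  v ∉ S ∧ ∀ x ∈ S, ∀ y ∈ S, χ s(v, x) = χ s(v, y)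

instance [DecidableEq V] [DecidableEq C] (v : V) (S : Finset V) :
    Decidable (IsMonochromaticStar χ v S) := by
  unfold IsMonochromaticStar; infer_instance

variable {χ}

theorem isMonochromaticStar_pair_iff [DecidableEq V] {v x y : V} (hx : v ≠ x) (hy : v ≠ y) :
    IsMonochromaticStar χ v {x, y} ↔ χ s(v, x) = χ s(v, y) := by
  constructor
  · rintro ⟨-, h⟩
    exact h x (by simp) y (by simp)
  · intro h
    refine ⟨by simp [hx, hy], ?_⟩
    simp only [mem_insert, mem_singleton]
    rintro a (rfl | rfl) b (rfl | rfl) <;> simp [h]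

end Stars

section Orderable

variable {n : ℕ} {χ : Sym2 (Fin n) → ℕ}

theorem HasOrderableClique.exists_isMonochromaticStar {k : ℕ}
    (h : HasOrderableClique (k + 1) n χ) : ∃ v S, IsMonochromaticStar χ v S ∧ #S = k := by
  obtain ⟨f, hf, π, hπ⟩ := h
  set i₀ := π.symm 0
  have hmin : ∀ j, j ≠ i₀ → π i₀ < π j := fun j hj => by
    rw [Equiv.apply_symm_apply]
    exact Fin.pos_iff_ne_zero.mpr fun h => hj (π.symm_apply_eq.mpr h.symm).symm
  refine ⟨f i₀, univ.image (f ∘ i₀.succAbove), ⟨?_, ?_⟩, ?_⟩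
  · simp only [mem_image, mem_univ, true_and, Function.comp_apply, not_exists]
    exact fun a h => Fin.succAbove_ne i₀ a (hf h)
  · simp only [mem_image, mem_univ, true_and, Function.comp_apply]
    rintro _ ⟨a, rfl⟩ _ ⟨b, rfl⟩
    exact hπ i₀ _ _ (Fin.succAbove_ne i₀ a).symm (Fin.succAbove_ne i₀ b).symm
      (hmin _ (Fin.succAbove_ne i₀ a)) (hmin _ (Fin.succAbove_ne i₀ b))
  · rw [card_image_of_injective _ (hf.comp Fin.succAbove_right_injective), card_univ,
      Fintype.card_fin]

theorem hasOrderableClique_four_of_cherry {v a b c : Fin n}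
    (hva : v ≠ a) (hvb : v ≠ b) (hvc : v ≠ c) (hab : a ≠ b) (hac : a ≠ c) (hbc : b ≠ c)
    (hv₁ : χ s(v, a) = χ s(v, b)) (hv₂ : χ s(v, a) = χ s(v, c))
    (ha : χ s(a, b) = χ s(a, c)) : HasOrderableClique 4 n χ := by
  refine ⟨![v, a, b, c], ?_, Equiv.refl _, ?_⟩
  · intro i j hij
    fin_cases i <;> fin_cases j <;> simp_all
  · intro i j k _ _ hij hik
    simp only [Equiv.refl_apply] at hij hik
    fin_cases i <;> fin_cases j <;> fin_cases k <;> simp_all [Fin.lt_def]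

theorem exists_isMonochromaticStar_erase_of_not_hasRainbowClique
    (h : ¬ HasRainbowClique 3 n χ) {t : Finset (Fin n)} (ht : #t = 3) :
    ∃ v ∈ t, IsMonochromaticStar χ v (t.erase v) := by
  obtain ⟨a, b, c, hab, hac, hbc, rfl⟩ := card_eq_three.mp ht
  by_contra! hcon
  simp only [mem_insert, mem_singleton, forall_eq_or_imp, forall_eq] at hcon
  obtain ⟨ha, hb, hc⟩ := hcon
  have e₁ : ({a, b, c} : Finset (Fin n)).erase a = {b, c} := by
    ext x; simp only [mem_erase, mem_insert, mem_singleton]; grind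
  have e₂ : ({a, b, c} : Finset (Fin n)).erase b = {a, c} := by
    ext x; simp only [mem_erase, mem_insert, mem_singleton]; grind
  have e₃ : ({a, b, c} : Finset (Fin n)).erase c = {a, b} := by
    ext x; simp only [mem_erase, mem_insert, mem_singleton]; grind
  rw [e₁, isMonochromaticStar_pair_iff hab hac] at ha
  rw [e₂, isMonochromaticStar_pair_iff hab.symm hbc, Sym2.eq_swap] at hb
  rw [e₃, isMonochromaticStar_pair_iff hac.symm hbc.symm, Sym2.eq_swap,
    Sym2.eq_swap (a := c)] at hc
  refine h ⟨![a, b, c], ?_, ?_⟩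
  · intro i j hij
    fin_cases i <;> fin_cases j <;> simp_all
  · intro i j k l hij hkl heq
    fin_cases i <;> fin_cases j <;> fin_cases k <;> fin_cases l <;>
      simp_all

theorem IsMonochromaticStar.card_le_two (hor : ¬ HasOrderableClique 4 n χ)
    (hrb : ¬ HasRainbowClique 3 n χ) {v : Fin n} {S : Finset (Fin n)}
    (hS : IsMonochromaticStar χ v S) : #S ≤ 2 := by
  by_contra! h
  obtain ⟨T, hTS, hT⟩ := exists_subset_card_eq (show 3 ≤ #S by omega)
  obtain ⟨u, huT, hu⟩ := exists_isMonochromaticStar_erase_of_not_hasRainbowClique hrb hT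
  obtain ⟨b, c, hbc, hTu⟩ :=
    card_eq_two.mp (by rw [card_erase_of_mem huT, hT] : #(T.erase u) = 2)
  have hb : b ∈ T.erase u := by simp [hTu]
  have hc : c ∈ T.erase u := by simp [hTu]
  have hvT : ∀ x ∈ T, v ≠ x := fun x hx hvx => hS.1 (hvx ▸ hTS hx)
  have hcol : ∀ x ∈ T, χ s(v, u) = χ s(v, x) := fun x hx => hS.2 u (hTS huT) x (hTS hx)
  rw [hTu, isMonochromaticStar_pair_iff (ne_of_mem_erase hb).symm
    (ne_of_mem_erase hc).symm] at hu
  exact hor <| hasOrderableClique_four_of_cherry (hvT u huT) (hvT b (mem_of_mem_erase hb))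
    (hvT c (mem_of_mem_erase hc)) (ne_of_mem_erase hb).symm (ne_of_mem_erase hc).symm hbc
    (hcol b (mem_of_mem_erase hb)) (hcol c (mem_of_mem_erase hc)) hu

end Orderable

section Counting

variable {V C : Type*} [Fintype V] [DecidableEq V] [DecidableEq C] {χ : Sym2 V → C}

variable (χ) in
def cherriesAt (v : V) : Finset (Finset V) :=
  (univ.powersetCard 2).filter (IsMonochromaticStar χ v)

/- Two overlapping cherries at `v` would form a monochromatic star with three leaves. -/
theorem two_mul_card_cherriesAt_le {v : V}
    (hstar : ∀ S, IsMonochromaticStar χ v S → #S ≤ 2) :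
    2 * #(cherriesAt χ v) ≤ Fintype.card V - 1 := by
  set P := cherriesAt χ v
  have hcard : ∀ s ∈ P, #s = 2 := fun s hs => (mem_powersetCard.mp (mem_filter.mp hs).1).2
  have hdisj : (P : Set (Finset V)).PairwiseDisjoint id := by
    intro s hs s' hs' hne
    refine disjoint_left.mpr fun x hxs hxs' => hne ?_
    have hmono := (mem_filter.mp hs).2
    have hmono' := (mem_filter.mp hs').2
    have hunion : IsMonochromaticStar χ v (s ∪ s') := by
      refine ⟨by simp [hmono.1, hmono'.1], ?_⟩
      have hx : ∀ y ∈ s ∪ s', χ s(v, y) = χ s(v, x) := by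
        simp only [mem_union]
        rintro y (hy | hy)
        exacts [hmono.2 y hy x hxs, hmono'.2 y hy x hxs']
      exact fun y hy z hz => (hx y hy).trans (hx z hz).symm
    have hle := hstar _ hunion
    exact (eq_of_subset_of_card_le subset_union_left (hle.trans (hcard s hs).ge)).trans
      (eq_of_subset_of_card_le subset_union_right (hle.trans (hcard s' hs').ge)).symm
  calc 2 * #P = ∑ s ∈ P, #s := by rw [sum_congr rfl hcard, sum_const, smul_eq_mul, mul_comm]
    _ = #(P.biUnion id) := (card_biUnion hdisj).symm
    _ ≤ #(univ.erase v) := card_le_card <| biUnion_subset.mpr fun s hs x hx =>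
        mem_erase.mpr ⟨fun h => (mem_filter.mp hs).2.1 (h ▸ hx), mem_univ x⟩
    _ = Fintype.card V - 1 := by rw [card_erase_of_mem (mem_univ v), card_univ]

theorem two_mul_choose_three_le
    (hapex : ∀ t : Finset V, #t = 3 → ∃ v ∈ t, IsMonochromaticStar χ v (t.erase v))
    (hstar : ∀ v S, IsMonochromaticStar χ v S → #S ≤ 2) :
    2 * (Fintype.card V).choose 3 ≤ Fintype.card V * (Fintype.card V - 1) := by
  have hsurj : Set.SurjOn (fun p : Σ _ : V, Finset V => insert p.1 p.2)
      (univ.sigma (cherriesAt χ)) (univ.powersetCard 3 : Finset (Finset V)) := by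
    intro t ht
    obtain ⟨v, hv, hmono⟩ := hapex t (mem_powersetCard.mp ht).2
    refine ⟨⟨v, t.erase v⟩, ?_, insert_erase hv⟩
    simp [cherriesAt, hmono, card_erase_of_mem hv, (mem_powersetCard.mp ht).2]
  calc 2 * (Fintype.card V).choose 3 = 2 * #(univ.powersetCard 3 : Finset (Finset V)) := by
        rw [card_powersetCard, card_univ]
    _ ≤ 2 * #(univ.sigma (cherriesAt χ)) := by gcongr; exact card_le_card_of_surjOn _ hsurj
    _ = ∑ v, 2 * #(cherriesAt χ v) := by rw [card_sigma, mul_sum]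
    _ ≤ ∑ _v : V, (Fintype.card V - 1) :=
        sum_le_sum fun v _ => two_mul_card_cherriesAt_le (hstar v)
    _ = Fintype.card V * (Fintype.card V - 1) := by rw [sum_const, card_univ, smul_eq_mul]

end Counting

-- Addition in `Fin 5` wraps around, so colour `0` goes exactly to the edges of the 5-cycle.
def pentagonColoring : Sym2 (Fin 5) → ℕ :=
  Sym2.lift ⟨fun i j => if j = i + 1 ∨ i = j + 1 then 0 else 1,
    fun i j => by simp only [or_comm]⟩

theorem pentagonColoring_card_le_two {v : Fin 5} {S : Finset (Fin 5)}
    (hS : IsMonochromaticStar pentagonColoring v S) : #S ≤ 2 := by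
  by_contra! h
  obtain ⟨T, hTS, hT⟩ := exists_subset_card_eq (show 3 ≤ #S by omega)
  obtain ⟨x, y, z, hxy, hxz, hyz, rfl⟩ := card_eq_three.mp hT
  have hv : ∀ w ∈ ({x, y, z} : Finset (Fin 5)), v ≠ w := fun w hw hvw => hS.1 (hvw ▸ hTS hw)
  have hcol : ∀ w ∈ ({x, y, z} : Finset (Fin 5)),
      pentagonColoring s(v, x) = pentagonColoring s(v, w) :=
    fun w hw => hS.2 x (hTS (by simp)) w (hTS hw)
  have no_triple : ∀ v x y z : Fin 5, v ≠ x → v ≠ y → v ≠ z → x ≠ y → x ≠ z → y ≠ z →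
      pentagonColoring s(v, x) = pentagonColoring s(v, y) →
      pentagonColoring s(v, x) ≠ pentagonColoring s(v, z) := by decide
  exact no_triple v x y z (hv x (by simp)) (hv y (by simp)) (hv z (by simp)) hxy hxz hyz
    (hcol y (by simp)) (hcol z (by simp))

set_option maxRecDepth 10000 in
theorem not_hasRainbowClique_pentagonColoring :
    ¬ HasRainbowClique 3 5 pentagonColoring := by
  unfold HasRainbowClique; decide

/-- CR(4,3) = 6. -/
theorem CR_4_3 :
    (∀ χ : Sym2 (Fin 6) → ℕ, HasOrderableClique 4 6 χ ∨ HasRainbowClique 3 6 χ) ∧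
    (∃ χ : Sym2 (Fin 5) → ℕ,
      ¬ HasOrderableClique 4 5 χ ∧ ¬ HasRainbowClique 3 5 χ) := by
  refine ⟨fun χ => ?_, pentagonColoring, fun h => ?_, not_hasRainbowClique_pentagonColoring⟩
  · by_contra! ⟨hor, hrb⟩
    have := two_mul_choose_three_le
      (fun _ => exists_isMonochromaticStar_erase_of_not_hasRainbowClique hrb)
      (fun _ _ => IsMonochromaticStar.card_le_two hor hrb)
    simp [Nat.choose] at this
  · obtain ⟨v, S, hS, hcard⟩ := h.exists_isMonochromaticStar
    exact absurd (pentagonColoring_card_le_two hS) (by omega)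
end

section
/- CR(C_4, C_4) = 5. That is: every edge-coloring of the complete graph K_5 (with arbitrarily many colors) contains an orderable copy of the 4-cycle C_4 or a rainbow copy of C_4, and there exists an edge-coloring of K_4 containing neither an orderable C_4 nor a rainbow C_4. -/
/-- The adjacency relation of the 4-cycle `C₄` on `Fin 4`, with edges
`{0,1}, {1,2}, {2,3}, {3,0}`. -/
def C4Adj : Fin 4 → Fin 4 → Prop := fun i j => j = i + 1 ∨ i = j + 1

/-- The edge-coloring `χ` of the complete graph on `Fin n` contains an orderable copy
of the 4-cycle `C₄`. -/
def HasOrderableC4 (n : ℕ) (χ : Sym2 (Fin n) → ℕ) : Prop :=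
  ∃ f : Fin 4 → Fin n, Function.Injective f ∧
    OrderableColoring C4Adj (fun i j => χ s(f i, f j))

/-- The edge-coloring `χ` of the complete graph on `Fin n` contains a rainbow copy
of the 4-cycle `C₄`: its four edges get pairwise distinct colors. -/
def HasRainbowC4 (n : ℕ) (χ : Sym2 (Fin n) → ℕ) : Prop :=
  ∃ f : Fin 4 → Fin n, Function.Injective f ∧
    ([χ s(f 0, f 1), χ s(f 1, f 2), χ s(f 2, f 3), χ s(f 3, f 0)]).Pairwise (· ≠ ·)

/-! An orderable colouring of `C₄` has a monochromatic path of length two at its first vertex;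
conversely, a monochromatic path `a c b` in `K_n` closes through any fourth vertex to a `C₄`
that is orderable once `c` is ranked first. So a colouring of `K₅` without orderable `C₄` is
proper, and each of its non-rainbow 4-cycles has a monochromatic pair of opposite edges. On four
vertices this makes two of the three perfect matchings, say `pq|rs` and `pr|qs`, monochromatic,
and then the cycle `q t r s` through the fifth vertex `t` yields a monochromatic path at `q` or
at `r`. On `K₄`, the colouring `{a, b} ↦ a xor b` is proper and uses three colours only. -/

lemma OrderableColoring.exists_monochromatic_path {m : ℕ} [NeZero m]
    {Adj : Fin m → Fin m → Prop} {c : Fin m → Fin m → ℕ} (hc : OrderableColoring Adj c)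
    (hirr : ∀ i, ¬ Adj i i) (hdeg : ∀ i, ∃ j k, Adj i j ∧ Adj i k ∧ j ≠ k) :
    ∃ i j k, Adj i j ∧ Adj i k ∧ j ≠ k ∧ c i j = c i k := by
  obtain ⟨π, hπ⟩ := hc
  obtain ⟨j, k, hj, hk, hjk⟩ := hdeg (π.symm 0)
  have later {l : Fin m} (hl : Adj (π.symm 0) l) : π (π.symm 0) < π l := by
    rw [π.apply_symm_apply, Fin.pos_iff_ne_zero]
    intro hl0
    obtain rfl := π.eq_symm_apply.mpr hl0
    exact hirr _ hl
  exact ⟨_, j, k, hj, hk, hjk, hπ _ j k hj hk (later hj) (later hk)⟩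

lemma C4Adj.eq_or_eq_one_of_swap_lt : ∀ i j k : Fin 4, C4Adj i j → C4Adj i k →
    Equiv.swap 0 1 i < Equiv.swap 0 1 j → Equiv.swap 0 1 i < Equiv.swap 0 1 k →
    j = k ∨ i = 1 := by
  unfold C4Adj; decide

section MonochromaticPath

variable {n : ℕ} {χ : Sym2 (Fin n) → ℕ}

lemma HasOrderableC4.exists_monochromatic_path (h : HasOrderableC4 n χ) :
    ∃ a b c : Fin n, b ≠ c ∧ χ s(a, b) = χ s(a, c) := by
  obtain ⟨f, hf, hc⟩ := h
  obtain ⟨i, j, k, -, -, hjk, hijk⟩ := hc.exists_monochromatic_path (by unfold C4Adj; decide)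
    (fun i => ⟨i + 1, i - 1, by revert i; unfold C4Adj; decide⟩)
  exact ⟨f i, f j, f k, hf.ne hjk, hijk⟩

lemma hasOrderableC4_of_monochromatic_path {a c b w : Fin n} (h : [a, c, b, w].Nodup)
    (hab : χ s(a, c) = χ s(c, b)) : HasOrderableC4 n χ := by
  refine ⟨![a, c, b, w], List.nodup_ofFn.mp h, Equiv.swap 0 1,
    fun i j k hj hk hij hik => ?_⟩
  obtain rfl | rfl := C4Adj.eq_or_eq_one_of_swap_lt i j k hj hk hij hik
  · rfl
  · have key : ∀ j, C4Adj 1 j → χ s(![a, c, b, w] 1, ![a, c, b, w] j) = χ s(c, b) := by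
      intro j hj
      obtain rfl | rfl : j = 0 ∨ j = 2 := by revert j; unfold C4Adj; decide
      · exact Sym2.eq_swap ▸ hab
      · rfl
    exact (key j hj).trans (key k hk).symm

lemma opposite_colors_eq_of_not_rainbow (hord : ¬ HasOrderableC4 n χ)
    (hrain : ¬ HasRainbowC4 n χ) {p q r s : Fin n} (h : [p, q, r, s].Nodup) :
    χ s(p, q) = χ s(r, s) ∨ χ s(q, r) = χ s(s, p) := by
  by_contra! hne
  have proper {a c b w : Fin n} (h' : [a, c, b, w].Nodup) : χ s(a, c) ≠ χ s(c, b) :=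
    fun hab => hord (hasOrderableC4_of_monochromatic_path h' hab)
  refine hrain ⟨![p, q, r, s], List.nodup_ofFn.mp h, ?_⟩
  have h₁ : χ s(p, q) ≠ χ s(q, r) := proper (w := s) h
  have h₂ : χ s(q, r) ≠ χ s(r, s) := proper (w := p) (by grind)
  have h₃ : χ s(r, s) ≠ χ s(s, p) := proper (w := q) (by grind)
  have h₄ : χ s(s, p) ≠ χ s(p, q) := proper (w := r) (by grind)
  show [χ s(p, q), χ s(q, r), χ s(r, s), χ s(s, p)].Pairwise (· ≠ ·)
  simp [h₁, h₂, h₃, h₄.symm, hne.1, hne.2]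

lemma false_of_two_monochromatic_matchings (hord : ¬ HasOrderableC4 n χ)
    (hrain : ¬ HasRainbowC4 n χ) {p q r s t : Fin n} (h : [p, q, r, s, t].Nodup)
    (hpq : χ s(p, q) = χ s(r, s)) (hpr : χ s(p, r) = χ s(q, s)) : False := by
  rcases opposite_colors_eq_of_not_rainbow hord hrain (p := q) (q := t) (r := r) (s := s)
    (by grind) with hqt | htr
  · exact hord (hasOrderableC4_of_monochromatic_path (w := r) (by grind) (hpq.trans hqt.symm))
  · refine hord (hasOrderableC4_of_monochromatic_path (a := p) (c := r) (b := t) (w := q)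
      (by grind) ?_)
    rw [hpr, Sym2.eq_swap, ← htr, Sym2.eq_swap]

end MonochromaticPath

theorem hasOrderableC4_or_hasRainbowC4_fin_five (χ : Sym2 (Fin 5) → ℕ) :
    HasOrderableC4 5 χ ∨ HasRainbowC4 5 χ := by
  by_contra! h
  obtain ⟨hord, hrain⟩ := h
  have cycle {p q r s : Fin 5} (h : [p, q, r, s].Nodup) :=
    opposite_colors_eq_of_not_rainbow hord hrain h
  have two {p q r s : Fin 5} (h : [p, q, r, s, 0].Nodup) :=
    false_of_two_monochromatic_matchings hord hrain h
  -- two of the matchings `12|34`, `13|24`, `14|23` of `{1, 2, 3, 4}` are monochromatic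
  rcases cycle (p := 1) (q := 2) (r := 3) (s := 4) (by decide) with h₁₂ | h₂₃
  · rcases cycle (p := 1) (q := 3) (r := 2) (s := 4) (by decide) with h₁₃ | h₃₂
    · exact two (by decide) h₁₂ h₁₃
    · exact two (p := 1) (q := 2) (r := 4) (s := 3) (by decide)
        (by simpa only [Sym2.eq_swap] using h₁₂)
        (by simpa only [Sym2.eq_swap] using h₃₂.symm)
  · rcases cycle (p := 1) (q := 2) (r := 4) (s := 3) (by decide) with h₁₂ | h₂₄
    · exact two (p := 1) (q := 2) (r := 4) (s := 3) (by decide)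
        h₁₂ (by simpa only [Sym2.eq_swap] using h₂₃.symm)
    · exact two (p := 1) (q := 3) (r := 4) (s := 2) (by decide)
        (by simpa only [Sym2.eq_swap] using h₂₄.symm)
        (by simpa only [Sym2.eq_swap] using h₂₃.symm)

def xorColoring : Sym2 (Fin 4) → ℕ :=
  Sym2.lift ⟨fun a b => a.val ^^^ b.val, fun _ _ => Nat.xor_comm _ _⟩

lemma xorColoring_injective_right :
    ∀ a b c : Fin 4, xorColoring s(a, b) = xorColoring s(a, c) → b = c := by
  decide

lemma xorColoring_mem_Icc :
    ∀ a b : Fin 4, a ≠ b → xorColoring s(a, b) ∈ Finset.Icc 1 3 := by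
  decide

lemma not_hasOrderableC4_xorColoring : ¬ HasOrderableC4 4 xorColoring := by
  intro h
  obtain ⟨a, b, c, hbc, habc⟩ := h.exists_monochromatic_path
  exact hbc (xorColoring_injective_right a b c habc)

lemma not_hasRainbowC4_xorColoring : ¬ HasRainbowC4 4 xorColoring := by
  rintro ⟨f, hf, hrain⟩
  have hsub : [xorColoring s(f 0, f 1), xorColoring s(f 1, f 2), xorColoring s(f 2, f 3),
      xorColoring s(f 3, f 0)].toFinset ⊆ Finset.Icc 1 3 := by
    intro x hx
    simp only [List.toFinset_cons, List.toFinset_nil, insert_empty_eq, Finset.mem_insert,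
      Finset.mem_singleton] at hx
    rcases hx with rfl | rfl | rfl | rfl <;> exact xorColoring_mem_Icc _ _ (hf.ne (by decide))
  have hcard := Finset.card_le_card hsub
  rw [List.toFinset_card_of_nodup hrain] at hcard
  simp at hcard

/-- CR(C₄, C₄) = 5. -/
theorem CR_C4_C4 :
    (∀ χ : Sym2 (Fin 5) → ℕ, HasOrderableC4 5 χ ∨ HasRainbowC4 5 χ) ∧
    (∃ χ : Sym2 (Fin 4) → ℕ, ¬ HasOrderableC4 4 χ ∧ ¬ HasRainbowC4 4 χ) :=
  ⟨hasOrderableC4_or_hasRainbowC4_fin_five, xorColoring, not_hasOrderableC4_xorColoring,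
    not_hasRainbowC4_xorColoring⟩
end

section
/- An edge-coloring of the cycle graph C_n (n ≥ 3) is orderable if and only if there exists a vertex of the cycle whose two incident edges receive the same color. -/
/-- The adjacency relation of the cycle `Cₘ` on `Fin m`: vertices `i` and `j` are adjacent
iff one is the (cyclic) successor of the other. -/
def CycleAdj (m : ℕ) [NeZero m] : Fin m → Fin m → Prop := fun i j => j = i + 1 ∨ i = j + 1


/-!
The vertex that comes first in an admissible ordering sees both of its edges later, so they
share a color. Conversely, if the two edges at `v` share a color, order the cycle by rotating it
to start at `v`: every other vertex `i` then precedes `i + 1` but comes after `i - 1`, so it has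
at most one later neighbour, and `v` is the only vertex with two.
-/

theorem OrderableColoring.exists_forall_adj_eq {m : ℕ} [NeZero m] {Adj : Fin m → Fin m → Prop}
    {c : Fin m → Fin m → ℕ} (h : OrderableColoring Adj c) :
    ∃ v, ∀ j k, j ≠ v → k ≠ v → Adj v j → Adj v k → c v j = c v k := by
  obtain ⟨π, hπ⟩ := h
  have first : ∀ j, j ≠ π.symm 0 → π (π.symm 0) < π j := fun j hj => by
    rw [π.apply_symm_apply, Fin.pos_iff_ne_zero, Ne, ← π.eq_symm_apply]
    exact hj
  exact ⟨π.symm 0, fun j k hj hk hadj hadk => hπ _ j k hadj hadk (first j hj) (first k hk)⟩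

theorem cycleAdj_iff {m : ℕ} [NeZero m] {i j : Fin m} :
    CycleAdj m i j ↔ j = i + 1 ∨ j = i - 1 := by
  rw [CycleAdj, eq_sub_iff_add_eq, eq_comm (a := i)]

theorem OrderableColoring.exists_add_one_eq_sub_one {n : ℕ} [NeZero n]
    {c : Fin (n + 1) → Fin (n + 1) → ℕ} (h : OrderableColoring (CycleAdj (n + 1)) c) :
    ∃ v, c v (v + 1) = c v (v - 1) := by
  obtain ⟨v, hv⟩ := h.exists_forall_adj_eq
  exact ⟨v, hv _ _ (add_ne_left.2 Fin.zero_ne_one'.symm) (sub_eq_self.not.2 Fin.zero_ne_one'.symm)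
    (cycleAdj_iff.2 (.inl rfl)) (cycleAdj_iff.2 (.inr rfl))⟩

theorem Fin.sub_one_sub_lt_sub {n : ℕ} {i v : Fin (n + 1)} (h : i ≠ v) : i - 1 - v < i - v := by
  rw [sub_right_comm, Fin.sub_one_lt_iff, Fin.pos_iff_ne_zero]
  exact sub_ne_zero.2 h

theorem orderableColoring_cycleAdj_of_add_one_eq_sub_one {n : ℕ}
    {c : Fin (n + 1) → Fin (n + 1) → ℕ} {v : Fin (n + 1)} (hv : c v (v + 1) = c v (v - 1)) :
    OrderableColoring (CycleAdj (n + 1)) c := by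
  refine ⟨Equiv.subRight v, fun i j k hij hik hj hk => ?_⟩
  have pred_later : i - v < i - 1 - v → i = v := fun h =>
    by_contra fun hne => (Fin.sub_one_sub_lt_sub hne).not_gt h
  simp only [Equiv.subRight_apply] at hj hk
  rcases cycleAdj_iff.1 hij with rfl | rfl <;> rcases cycleAdj_iff.1 hik with rfl | rfl
  · rfl
  · obtain rfl := pred_later hk
    exact hv
  · obtain rfl := pred_later hj
    exact hv.symm
  · rfl

theorem orderableColoring_cycleAdj_iff {n : ℕ} [NeZero n] {c : Fin (n + 1) → Fin (n + 1) → ℕ} :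
    OrderableColoring (CycleAdj (n + 1)) c ↔ ∃ v, c v (v + 1) = c v (v - 1) :=
  ⟨OrderableColoring.exists_add_one_eq_sub_one,
    fun ⟨_, hv⟩ => orderableColoring_cycleAdj_of_add_one_eq_sub_one hv⟩

/-- An edge-coloring of the cycle `C_n` (`n ≥ 3`, here `n = k + 3`) is orderable if and
only if some vertex of the cycle has its two incident edges colored the same. -/
theorem orderable_cycle_iff (k : ℕ) (χ : Sym2 (Fin (k + 3)) → ℕ) :
    OrderableColoring (CycleAdj (k + 3)) (fun i j => χ s(i, j)) ↔
    ∃ v : Fin (k + 3), χ s(v, v + 1) = χ s(v, v - 1) :=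
  orderableColoring_cycleAdj_iff
end
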